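/- arXiv:math/0505426 — 9 statements merged into one kernel-verified Lean document; each statement's English description precedes it below -/
import Mathlib

section
/- Let M and N be commutative monoids with N conical (x ≤ 0 implies x = 0 for the algebraic preorder), and let μ : M → N be a monoid homomorphism. Then: (1) the set I = {x ∈ M : μ(x) = 0} is an o-ideal of M, i.e. it is nonempty and x + y ∈ I if and only if x ∈ I and y ∈ I; (2) the relation x ≡_I y defined by ∃ u, v ∈ I with x + u = y + v is a monoid congruence on M; (3) there is a unique monoid homomorphism μ̄ : M/≡_I → N such that μ̄([x]) = μ(x) for all x ∈ M; and (4) if μ is a V-homomorphism, then so is μ̄. -/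
/-! Since `N` is conical, a sum lies in `μ⁻¹{0}` exactly when both summands do. Adding elements
of `I = μ⁻¹{0}` does not change the value of `μ`, so `μ` is constant on `≡_I`-classes and descends
to the quotient. A splitting of `μ̄ [c] = μ c` lifts through `μ` and projects back to one of `[c]`. -/

def IsVHom {M N : Type*} [AddCommMonoid M] [AddCommMonoid N] (μ : M → N) : Prop :=
  ∀ (c : M) (a' b' : N), μ c = a' + b' →
    ∃ a b : M, c = a + b ∧ μ a = a' ∧ μ b = b'

theorem add_eq_zero_iff_of_conical {N : Type*} [AddCommMonoid N]
    (hN : ∀ x y : N, x + y = 0 → x = 0) {x y : N} : x + y = 0 ↔ x = 0 ∧ y = 0 :=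
  ⟨fun h => ⟨hN x y h, hN y x (add_comm x y ▸ h)⟩, fun ⟨hx, hy⟩ => by rw [hx, hy, add_zero]⟩

namespace AddSubmonoid

variable {M : Type*} [AddCommMonoid M]

/-- The congruence `≡_S` of the paper, collapsing `S` to `0`. -/
protected def con (S : AddSubmonoid M) : AddCon M where
  r x y := ∃ u ∈ S, ∃ v ∈ S, x + u = y + v
  iseqv := by
    refine ⟨fun x => ⟨0, S.zero_mem, 0, S.zero_mem, rfl⟩, ?_, ?_⟩
    · rintro x y ⟨u, hu, v, hv, h⟩
      exact ⟨v, hv, u, hu, h.symm⟩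
    · rintro x y z ⟨u, hu, v, hv, h⟩ ⟨u', hu', v', hv', h'⟩
      refine ⟨u + u', S.add_mem hu hu', v' + v, S.add_mem hv' hv, ?_⟩
      rw [← add_assoc, h, add_right_comm, h', add_assoc]
  add' := by
    rintro w x y z ⟨u, hu, v, hv, h⟩ ⟨u', hu', v', hv', h'⟩
    refine ⟨u + u', S.add_mem hu hu', v + v', S.add_mem hv hv', ?_⟩
    rw [add_add_add_comm, h, h', add_add_add_comm]

theorem con_iff {S : AddSubmonoid M} {x y : M} :
    S.con x y ↔ ∃ u ∈ S, ∃ v ∈ S, x + u = y + v :=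
  Iff.rfl

theorem con_le_ker {N : Type*} [AddCommMonoid N] {S : AddSubmonoid M} {μ : M →+ N}
    (hS : S ≤ AddMonoidHom.mker μ) : S.con ≤ AddCon.ker μ := by
  rintro x y ⟨u, hu, v, hv, h⟩
  have hu : μ u = 0 := hS hu
  have hv : μ v = 0 := hS hv
  show μ x = μ y
  simpa only [map_add, hu, hv, add_zero] using congrArg μ h

end AddSubmonoid

theorem IsVHom.of_comp_surjective {M Q N : Type*} [AddCommMonoid M] [AddCommMonoid Q]
    [AddCommMonoid N] {π : M →+ Q} (hπ : Function.Surjective π) {ν : Q → N}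
    (h : IsVHom (ν ∘ π)) : IsVHom ν := by
  intro q a' b' hq
  obtain ⟨c, rfl⟩ := hπ q
  obtain ⟨a, b, rfl, ha, hb⟩ := h c a' b' hq
  exact ⟨π a, π b, map_add π a b, ha, hb⟩

/-- **Lemma 1.1.** For a monoid homomorphism `μ : M → N` with `N` conical:
`I = μ⁻¹{0}` is an o-ideal, `≡_I` is a monoid congruence, `μ` factors uniquely
through the quotient, and the factor map is a V-homomorphism if `μ` is. -/
theorem vhom_factors_through_zero_ideal {M N : Type*} [AddCommMonoid M] [AddCommMonoid N]
    (hN : ∀ x y : N, x + y = 0 → x = 0) (μ : M →+ N) :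
    -- (1) `I = {x : μ x = 0}` is an o-ideal of `M`
    ({x : M | μ x = 0}.Nonempty ∧
      (∀ x y : M, (x + y) ∈ {x : M | μ x = 0} ↔ x ∈ {x : M | μ x = 0} ∧ y ∈ {x : M | μ x = 0})) ∧
    -- (2) `≡_I` is a monoid congruence on `M`
    ∃ c : AddCon M,
      (∀ x y : M, c x y ↔ ∃ u ∈ {x : M | μ x = 0}, ∃ v ∈ {x : M | μ x = 0}, x + u = y + v) ∧
      -- (3) unique factorization of `μ` through the quotient
      ∃ μbar : c.Quotient →+ N,
        (∀ x : M, μbar (c.mk' x) = μ x) ∧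
        (∀ ν : c.Quotient →+ N, (∀ x : M, ν (c.mk' x) = μ x) → ν = μbar) ∧
        -- (4) `μbar` is a V-homomorphism whenever `μ` is
        (IsVHom μ → IsVHom μbar) := by
  have hI : ∀ x y : M, x + y ∈ {x : M | μ x = 0} ↔ x ∈ {x : M | μ x = 0} ∧ y ∈ {x : M | μ x = 0} :=
    fun x y => by simp only [Set.mem_ofPred_eq, map_add, add_eq_zero_iff_of_conical hN]
  set c := (AddMonoidHom.mker μ).con
  have hc : c ≤ AddCon.ker μ := AddSubmonoid.con_le_ker le_rfl
  refine ⟨⟨⟨0, map_zero μ⟩, hI⟩, c, fun x y => AddSubmonoid.con_iff, c.lift μ hc, fun x => rfl,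
    fun ν hν => c.lift_unique hc ν (AddMonoidHom.ext hν),
    fun hV => IsVHom.of_comp_surjective c.mk'_surjective hV⟩
end

section
/- Let L be a lattice and extend the generators of the dimension monoid to arbitrary pairs by Δ(x,y) := Δ(x ∧ y, x ∨ y). Then for all x, y, z ∈ L: (i) Δ(x,y) = 0 in Dim L if and only if x = y; (ii) Δ(x,y) = Δ(y,x); (iii) Δ(x,z) ≤ Δ(x,y) + Δ(y,z), where ≤ is the algebraic preorder of Dim L. -/
section Dim

variable (L : Type*) [Lattice L]

/-- Generators of the dimension monoid: pairs `x ≤ y` in `L`. -/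
abbrev DimGen := {p : L × L // p.1 ≤ p.2}

/-- The free commutative monoid on the generators. -/
abbrev DimFree := DimGen L →₀ ℕ

/-- The defining relations (D0), (D1), (D2) of the dimension monoid. -/
inductive DimRel : DimFree L → DimFree L → Prop
  | d0 (x : L) : DimRel (Finsupp.single ⟨(x, x), le_rfl⟩ 1) 0
  | d1 (x y z : L) (hxy : x ≤ y) (hyz : y ≤ z) :
      DimRel (Finsupp.single ⟨(x, z), hxy.trans hyz⟩ 1)
        (Finsupp.single ⟨(x, y), hxy⟩ 1 + Finsupp.single ⟨(y, z), hyz⟩ 1)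
  | d2 (x y : L) : DimRel (Finsupp.single ⟨(x ⊓ y, x), inf_le_left⟩ 1)
        (Finsupp.single ⟨(y, x ⊔ y), le_sup_right⟩ 1)

/-- The smallest monoid congruence containing the defining relations. -/
noncomputable def DimCon : AddCon (DimFree L) := addConGen (DimRel L)

/-- The dimension monoid of a lattice `L`. -/
abbrev DimMonoid := (DimCon L).Quotient

variable {L}

/-- The extended generator `Δ(x,y) := Δ(x ⊓ y, x ⊔ y)` of the dimension monoid. -/
noncomputable def dimDelta (x y : L) : DimMonoid L :=
  (DimCon L).mk' (Finsupp.single ⟨(x ⊓ y, x ⊔ y), inf_le_sup⟩ 1)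

end Dim

/-
By (D1), `Δ` of an interval is the sum of `Δ` over the steps of any chain inside it, and (D2)
transports `Δ` along perspectivity. Consequently `Δ` can only decrease when an interval `[a, b]`
is pushed down to `[a ⊓ c, b ⊓ c]` (which is perspective to `[a, a ⊔ (b ⊓ c)] ⊆ [a, b]`) or up
to `[a ⊔ c, b ⊔ c]`. For the triangle inequality, split `[x ⊓ y ⊓ z, x ⊔ y ⊔ z] ⊇ [x ⊓ z, x ⊔ z]`
at `y ⊓ z ≤ y ≤ y ⊔ z`: its outer pieces `[x ⊓ y ⊓ z, y ⊓ z]` and `[y ⊔ z, x ⊔ y ⊔ z]` are pushed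
down, resp. up, from `[x ⊓ y, y]` and `[y, x ⊔ y]`, and the remaining pieces make up `Δ(y, z)`.
Points are separated because `Δ(a, b) ↦ (0 if a = b, ⊤ otherwise)` respects the relations, hence
induces a homomorphism `Dim L →+ ℕ∞`.
-/

namespace DimMonoid

variable {L : Type*} [Lattice L]

noncomputable def delta (a b : L) (h : a ≤ b := by order) : DimMonoid L :=
  (DimCon L).mk' (Finsupp.single ⟨(a, b), h⟩ 1)

theorem delta_congr {a b a' b' : L} (h : a ≤ b) (ha : a = a') (hb : b = b') :
    delta a b h = delta a' b' (ha ▸ hb ▸ h) := by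
  subst ha hb; rfl

theorem _root_.dimDelta_eq_delta (x y : L) : dimDelta x y = delta (x ⊓ y) (x ⊔ y) :=
  rfl

theorem mk'_eq_of_dimRel {p q : DimFree L} (h : DimRel L p q) :
    (DimCon L).mk' p = (DimCon L).mk' q :=
  (AddCon.eq _).2 (AddConGen.Rel.of _ _ h)

theorem delta_self (a : L) : delta a a = 0 :=
  mk'_eq_of_dimRel (DimRel.d0 a)

theorem delta_add_delta {a b c : L} (hab : a ≤ b) (hbc : b ≤ c) :
    delta a b + delta b c = delta a c :=
  (mk'_eq_of_dimRel (DimRel.d1 a b c hab hbc)).symm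

theorem delta_inf_left_eq (a b : L) : delta (a ⊓ b) a = delta b (a ⊔ b) :=
  mk'_eq_of_dimRel (DimRel.d2 a b)

theorem exists_delta_add_of_le {a a' b' b : L} (ha : a ≤ a') (h : a' ≤ b') (hb : b' ≤ b) :
    ∃ e, delta a' b' + e = delta a b :=
  ⟨delta a a' + delta b' b, by
    rw [← delta_add_delta ha (h.trans hb), ← delta_add_delta h hb]; abel⟩

theorem exists_delta_inf_add {a b : L} (hab : a ≤ b) (c : L) :
    ∃ e, delta (a ⊓ c) (b ⊓ c) + e = delta a b := by
  have hpersp : delta (a ⊓ c) (b ⊓ c) = delta a (a ⊔ b ⊓ c) := by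
    calc delta (a ⊓ c) (b ⊓ c)
        = delta (b ⊓ c ⊓ a) (b ⊓ c) :=
          delta_congr _ (by rw [inf_right_comm, inf_eq_right.2 hab]) rfl
      _ = delta a (b ⊓ c ⊔ a) := delta_inf_left_eq _ _
      _ = delta a (a ⊔ b ⊓ c) := delta_congr _ rfl (sup_comm _ _)
  rw [hpersp]
  exact exists_delta_add_of_le le_rfl le_sup_left (sup_le hab inf_le_left)

theorem exists_delta_sup_add {a b : L} (hab : a ≤ b) (c : L) :
    ∃ e, delta (a ⊔ c) (b ⊔ c) + e = delta a b := by
  have hpersp : delta (a ⊔ c) (b ⊔ c) = delta (b ⊓ (a ⊔ c)) b := by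
    calc delta (a ⊔ c) (b ⊔ c)
        = delta (a ⊔ c) (b ⊔ (a ⊔ c)) :=
          delta_congr _ rfl (by rw [← sup_assoc, sup_eq_left.2 hab])
      _ = delta (b ⊓ (a ⊔ c)) b := (delta_inf_left_eq _ _).symm
  rw [hpersp]
  exact exists_delta_add_of_le (le_inf hab le_sup_left) inf_le_left le_rfl

theorem _root_.exists_dimDelta_add (x y z : L) :
    ∃ e, dimDelta x z + e = dimDelta x y + dimDelta y z := by
  obtain ⟨e₀, h₀⟩ := exists_delta_add_of_le (a := x ⊓ y ⊓ z) (b := x ⊔ y ⊔ z)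
    (by order) (inf_le_sup : x ⊓ z ≤ x ⊔ z) (by order)
  obtain ⟨e₁, h₁⟩ := exists_delta_inf_add (inf_le_right : x ⊓ y ≤ y) z
  obtain ⟨e₂, h₂⟩ := exists_delta_sup_add (le_sup_right : y ≤ x ⊔ y) z
  have hsplit : delta (x ⊓ y ⊓ z) (x ⊔ y ⊔ z) = delta (x ⊓ y ⊓ z) (y ⊓ z) + delta (y ⊓ z) y
      + (delta y (y ⊔ z) + delta (y ⊔ z) (x ⊔ y ⊔ z)) := by
    rw [delta_add_delta, delta_add_delta, delta_add_delta] <;> order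
  refine ⟨e₀ + e₁ + e₂, ?_⟩
  calc dimDelta x z + (e₀ + e₁ + e₂)
      = delta (x ⊓ y ⊓ z) (x ⊔ y ⊔ z) + e₁ + e₂ := by rw [dimDelta_eq_delta, ← h₀]; abel
    _ = (delta (x ⊓ y ⊓ z) (y ⊓ z) + e₁) + (delta (y ⊔ z) (x ⊔ y ⊔ z) + e₂)
          + (delta (y ⊓ z) y + delta y (y ⊔ z)) := by rw [hsplit]; abel
    _ = delta (x ⊓ y) y + delta y (x ⊔ y) + (delta (y ⊓ z) y + delta y (y ⊔ z)) := by rw [h₁, h₂]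
    _ = dimDelta x y + dimDelta y z := by
      rw [dimDelta_eq_delta, dimDelta_eq_delta, delta_add_delta, delta_add_delta] <;> order

open scoped Classical in
noncomputable def genWeight (p : DimGen L) : ℕ∞ := if p.1.1 = p.1.2 then 0 else ⊤

theorem genWeight_trans {a b c : L} (hab : a ≤ b) (hbc : b ≤ c) :
    genWeight ⟨(a, c), hab.trans hbc⟩ = genWeight ⟨(a, b), hab⟩ + genWeight ⟨(b, c), hbc⟩ := by
  by_cases hba : a = b
  · subst hba; simp [genWeight]
  · have hca : a ≠ c := fun hac => hba (le_antisymm hab (hac ▸ hbc))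
    simp [genWeight, hba, hca]

open scoped Classical in
theorem genWeight_inf_left (a b : L) :
    genWeight ⟨(a ⊓ b, a), inf_le_left⟩ = genWeight ⟨(b, a ⊔ b), le_sup_right⟩ :=
  if_congr (inf_eq_left.trans (sup_eq_right.symm.trans eq_comm)) rfl rfl

noncomputable def freeWeight : DimFree L →+ ℕ∞ :=
  Finsupp.liftAddHom fun p => multiplesHom ℕ∞ (genWeight p)

theorem freeWeight_single (p : DimGen L) : freeWeight (Finsupp.single p 1) = genWeight p := by
  simp [freeWeight]

theorem dimCon_le_ker_freeWeight : DimCon L ≤ AddCon.ker freeWeight := by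
  refine AddCon.addConGen_le.2 fun p q hpq => ?_
  rw [AddCon.ker_rel]
  cases hpq with
  | d0 a => simp [freeWeight_single, genWeight]
  | d1 a b c hab hbc =>
    rw [map_add, freeWeight_single, freeWeight_single, freeWeight_single, genWeight_trans]
  | d2 a b => rw [freeWeight_single, freeWeight_single, genWeight_inf_left]

noncomputable def weight : DimMonoid L →+ ℕ∞ :=
  (DimCon L).lift freeWeight dimCon_le_ker_freeWeight

theorem delta_eq_zero_iff {a b : L} (h : a ≤ b) : delta a b = 0 ↔ a = b := by
  refine ⟨fun h0 => by_contra fun hab => ?_, fun hab => by subst hab; exact delta_self a⟩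
  have hw := congrArg weight h0
  simp [weight, delta, freeWeight_single, genWeight, hab] at hw

end DimMonoid

open DimMonoid

theorem dimDelta_eq_zero_iff {L : Type*} [Lattice L] (x y : L) : dimDelta x y = 0 ↔ x = y := by
  rw [dimDelta_eq_delta, delta_eq_zero_iff inf_le_sup, inf_eq_sup]

theorem dimDelta_comm {L : Type*} [Lattice L] (x y : L) : dimDelta x y = dimDelta y x := by
  rw [dimDelta_eq_delta, dimDelta_eq_delta]
  exact delta_congr _ (inf_comm x y) (sup_comm x y)

/-- **Lemma 1.2.** The extended map `Δ` is a `Dim L`-valued distance on `L`: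
it separates points, is symmetric, and satisfies the triangle inequality with
respect to the algebraic preorder of `Dim L`. -/
theorem dimDelta_distance {L : Type*} [Lattice L] (x y z : L) :
    (dimDelta x y = 0 ↔ x = y) ∧
    dimDelta x y = dimDelta y x ∧
    ∃ c : DimMonoid L, dimDelta x z + c = dimDelta x y + dimDelta y z :=
  ⟨dimDelta_eq_zero_iff x y, dimDelta_comm x y, exists_dimDelta_add x y z⟩
end

section
/- Let L be a modular lattice, let u ≤ v in L, and let a, b be elements of the dimension monoid Dim L. If a + b = Δ(u,v), then there exist a positive integer n and a chain u = w₀ ≤ w₁ ≤ ⋯ ≤ w_{2n} = v in L such that a = Σ_{i<n} Δ(w_{2i}, w_{2i+1}) and b = Σ_{i<n} Δ(w_{2i+1}, w_{2i+2}). -/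
/-!
Call two finite families of intervals *equidecomposable* if each interval can be cut along a
finite chain so that the resulting pieces are matched one-to-one by projective intervals.
In a modular lattice a transposition `[b ⊓ c, b] ↗ [c, b ⊔ c]` carries chains to chains, so
together with the Schreier refinement theorem this relation is transitive; it is therefore a
monoid congruence containing (D0)–(D2), hence coarser than the one defining `Dim L`.
So `a + b = Δ(u, v)` makes the pieces of `a` and of `b` match the links of one chain from `u`
to `v`; each link is then an `a`-step or a `b`-step, padded by a trivial step of the other kind.
-/

theorem Multiset.Rel.symm {α : Type*} {r : α → α → Prop} [Std.Symm r] {s t : Multiset α}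
    (h : Multiset.Rel r s t) : Multiset.Rel r t s :=
  Multiset.rel_flip.1 (h.mono fun _ _ _ _ hab => symm_of r hab)

theorem Multiset.rel_refl {α : Type*} (r : α → α → Prop) [Std.Refl r] (s : Multiset α) :
    Multiset.Rel r s s :=
  Multiset.rel_refl_of_refl_on fun a _ => refl_of r a

section Lattice

variable {L : Type*} [Lattice L]

theorem dimCon_mk'_single_of_le {x y : L} (h : x ≤ y) :
    (DimCon L).mk' (Finsupp.single ⟨(x, y), h⟩ 1) = dimDelta x y := by
  have : (⟨(x, y), h⟩ : DimGen L) = ⟨(x ⊓ y, x ⊔ y), inf_le_sup⟩ := by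
    simp [inf_eq_left.2 h, sup_eq_right.2 h]
  rw [this]
  rfl

theorem dimCon_mk'_eq_of_dimRel {γ δ : DimFree L} (h : DimRel L γ δ) :
    (DimCon L).mk' γ = (DimCon L).mk' δ :=
  (AddCon.eq _).2 (AddConGen.Rel.of _ _ h)

theorem dimDelta_self (x : L) : dimDelta x x = 0 := by
  simpa [dimCon_mk'_single_of_le] using dimCon_mk'_eq_of_dimRel (DimRel.d0 x)

theorem dimDelta_add_dimDelta {x y z : L} (hxy : x ≤ y) (hyz : y ≤ z) :
    dimDelta x y + dimDelta y z = dimDelta x z := by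
  have := dimCon_mk'_eq_of_dimRel (DimRel.d1 x y z hxy hyz)
  rw [map_add] at this
  simpa [dimCon_mk'_single_of_le] using this.symm

theorem dimDelta_inf_left (x y : L) : dimDelta (x ⊓ y) x = dimDelta y (x ⊔ y) := by
  simpa [dimCon_mk'_single_of_le] using dimCon_mk'_eq_of_dimRel (DimRel.d2 x y)

open Classical in
noncomputable def dimSum : Multiset (DimGen L) →+ DimMonoid L :=
  (DimCon L).mk'.comp Multiset.toFinsupp.toAddMonoidHom

theorem dimSum_toMultiset (γ : DimFree L) :
    dimSum (Finsupp.toMultiset γ) = (DimCon L).mk' γ := by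
  simp [dimSum]

theorem dimSum_cons (g : DimGen L) (M : Multiset (DimGen L)) :
    dimSum (g ::ₘ M) = dimDelta g.1.1 g.1.2 + dimSum M := by
  rw [← Multiset.singleton_add, map_add, ← dimCon_mk'_single_of_le g.2]
  simp [dimSum]

def Perspective (g h : DimGen L) : Prop :=
  g.1.2 ⊓ h.1.1 = g.1.1 ∧ g.1.2 ⊔ h.1.1 = h.1.2

abbrev Projective : DimGen L → DimGen L → Prop :=
  Relation.ReflTransGen (Relation.SymmGen Perspective)

theorem Perspective.dimDelta_eq {g h : DimGen L} (hp : Perspective g h) :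
    dimDelta g.1.1 g.1.2 = dimDelta h.1.1 h.1.2 := by
  rw [← hp.1, ← hp.2]
  exact dimDelta_inf_left _ _

theorem Projective.dimDelta_eq {g h : DimGen L} (hp : Projective g h) :
    dimDelta g.1.1 g.1.2 = dimDelta h.1.1 h.1.2 := by
  induction hp with
  | refl => rfl
  | tail _ hp ih =>
    exact ih.trans (hp.elim Perspective.dimDelta_eq fun h => h.dimDelta_eq.symm)

theorem dimSum_eq_of_rel_projective {S T : Multiset (DimGen L)}
    (h : Multiset.Rel Projective S T) : dimSum S = dimSum T := by
  induction h with
  | zero => rfl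
  | cons hab _ ih => rw [dimSum_cons, dimSum_cons, hab.dimDelta_eq, ih]

inductive ChainLinks : L → L → List (DimGen L) → Prop
  | nil (x : L) : ChainLinks x x []
  | cons {x y z : L} (h : x ≤ y) {l : List (DimGen L)} :
      ChainLinks y z l → ChainLinks x z (⟨(x, y), h⟩ :: l)

theorem ChainLinks.le {x y : L} {c : List (DimGen L)} (hc : ChainLinks x y c) : x ≤ y := by
  induction hc with
  | nil => exact le_rfl
  | cons h _ ih => exact h.trans ih

theorem ChainLinks.append {x y z : L} {c d : List (DimGen L)} (hc : ChainLinks x y c)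
    (hd : ChainLinks y z d) : ChainLinks x z (c ++ d) := by
  induction hc with
  | nil => exact hd
  | cons h _ ih => exact .cons h (ih hd)

theorem ChainLinks.dimDelta_eq {x y : L} {c : List (DimGen L)} (hc : ChainLinks x y c) :
    dimDelta x y = dimSum (c : Multiset (DimGen L)) := by
  induction hc with
  | nil x => rw [dimDelta_self, Multiset.coe_nil, map_zero]
  | cons h hc ih => rw [← Multiset.cons_coe, dimSum_cons, ← ih, dimDelta_add_dimDelta h hc.le]

def Splits (g : DimGen L) (c : List (DimGen L)) : Prop :=
  ChainLinks g.1.1 g.1.2 c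

theorem splits_singleton (g : DimGen L) : Splits g [g] :=
  .cons g.2 (.nil _)

def Subdivision (M S : Multiset (DimGen L)) : Prop :=
  ∃ C : Multiset (List (DimGen L)), Multiset.Rel Splits M C ∧ S = C.bind (↑)

theorem Subdivision.zero : Subdivision (0 : Multiset (DimGen L)) 0 :=
  ⟨0, .zero, rfl⟩

theorem Subdivision.cons {g : DimGen L} {c : List (DimGen L)} {M S : Multiset (DimGen L)}
    (hg : Splits g c) (h : Subdivision M S) : Subdivision (g ::ₘ M) (c + S) := by
  obtain ⟨C, hC, rfl⟩ := h
  exact ⟨c ::ₘ C, hC.cons hg, by simp⟩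

theorem Subdivision.add {M N S T : Multiset (DimGen L)} (hM : Subdivision M S)
    (hN : Subdivision N T) : Subdivision (M + N) (S + T) := by
  obtain ⟨C, hC, rfl⟩ := hM
  obtain ⟨D, hD, rfl⟩ := hN
  exact ⟨C + D, hC.add hD, by simp⟩

theorem Subdivision.refl (M : Multiset (DimGen L)) : Subdivision M M := by
  induction M using Multiset.induction_on with
  | empty => exact .zero
  | cons g M ih => simpa using ih.cons (splits_singleton g)

theorem subdivision_zero_left {S : Multiset (DimGen L)} : Subdivision 0 S ↔ S = 0 := by
  refine ⟨fun ⟨C, hC, hS⟩ => ?_, fun h => h ▸ .zero⟩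
  simp [hS, Multiset.rel_zero_left.1 hC]

theorem subdivision_cons_left {g : DimGen L} {M S : Multiset (DimGen L)} :
    Subdivision (g ::ₘ M) S ↔ ∃ c S', Splits g c ∧ Subdivision M S' ∧ S = c + S' := by
  refine ⟨fun ⟨C, hC, hS⟩ => ?_, fun ⟨c, S', hc, hS', hS⟩ => hS ▸ hS'.cons hc⟩
  obtain ⟨c, C', hc, hC', rfl⟩ := Multiset.rel_cons_left.1 hC
  exact ⟨c, _, hc, ⟨C', hC', rfl⟩, by simp [hS]⟩

theorem subdivision_add_left {M N S : Multiset (DimGen L)} :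
    Subdivision (M + N) S ↔ ∃ SM SN, Subdivision M SM ∧ Subdivision N SN ∧ S = SM + SN := by
  refine ⟨fun ⟨C, hC, hS⟩ => ?_, fun ⟨SM, SN, hM, hN, hS⟩ => hS ▸ hM.add hN⟩
  obtain ⟨CM, CN, hM, hN, rfl⟩ := Multiset.rel_add_left.1 hC
  exact ⟨_, _, ⟨CM, hM, rfl⟩, ⟨CN, hN, rfl⟩, by simp [hS]⟩

theorem Subdivision.dimSum_eq {M S : Multiset (DimGen L)} (h : Subdivision M S) :
    dimSum M = dimSum S := by
  induction M using Multiset.induction_on generalizing S with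
  | empty => rw [subdivision_zero_left.1 h]
  | cons g M ih =>
    obtain ⟨c, S', hc, hS', rfl⟩ := subdivision_cons_left.1 h
    rw [dimSum_cons, map_add, ChainLinks.dimDelta_eq hc, ih hS']

theorem ChainLinks.subdivision_zero {p q : L} {c : List (DimGen L)} (hc : ChainLinks p q c)
    (hqp : q ≤ p) : Subdivision (c : Multiset (DimGen L)) 0 := by
  induction hc with
  | nil => exact .zero
  | @cons p m q hpm l hl ih =>
    obtain rfl : p = m := le_antisymm hpm (hl.le.trans hqp)
    simpa using (ih hqp).cons (g := ⟨(p, p), le_rfl⟩) (.nil p)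

theorem ChainLinks.exists_of_subdivision {x y : L} {c : List (DimGen L)} (hc : ChainLinks x y c)
    {T : Multiset (DimGen L)} (hT : Subdivision (c : Multiset (DimGen L)) T) :
    ∃ c', ChainLinks x y c' ∧ (c' : Multiset (DimGen L)) = T := by
  induction hc generalizing T with
  | nil x => exact ⟨[], .nil x, (subdivision_zero_left.1 hT).symm⟩
  | cons h hl ih =>
    rw [← Multiset.cons_coe] at hT
    obtain ⟨d, T', hd, hT', rfl⟩ := subdivision_cons_left.1 hT
    obtain ⟨c', hc', rfl⟩ := ih hT'
    exact ⟨_, ChainLinks.append hd hc', (Multiset.coe_add _ _).symm⟩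

theorem Subdivision.trans {M S T : Multiset (DimGen L)} (h₁ : Subdivision M S)
    (h₂ : Subdivision S T) : Subdivision M T := by
  induction M using Multiset.induction_on generalizing S T with
  | empty =>
    rw [subdivision_zero_left.1 h₁, subdivision_zero_left] at h₂
    exact h₂ ▸ .zero
  | cons g M ih =>
    obtain ⟨c, S', hc, hS', rfl⟩ := subdivision_cons_left.1 h₁
    obtain ⟨Tc, T', hTc, hT', rfl⟩ := subdivision_add_left.1 h₂
    obtain ⟨c', hc', rfl⟩ := ChainLinks.exists_of_subdivision hc hTc
    exact (ih hS' hT').cons hc'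

def Equidecomposable (M N : Multiset (DimGen L)) : Prop :=
  ∃ S T, Subdivision M S ∧ Subdivision N T ∧ Multiset.Rel Projective S T

theorem Equidecomposable.refl (M : Multiset (DimGen L)) : Equidecomposable M M :=
  ⟨M, M, .refl M, .refl M, Multiset.rel_refl _ M⟩

theorem Equidecomposable.symm {M N : Multiset (DimGen L)} (h : Equidecomposable M N) :
    Equidecomposable N M :=
  let ⟨S, T, hS, hT, hST⟩ := h
  ⟨T, S, hT, hS, hST.symm⟩

theorem Equidecomposable.add {M M' N N' : Multiset (DimGen L)} (h : Equidecomposable M N)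
    (h' : Equidecomposable M' N') : Equidecomposable (M + M') (N + N') :=
  let ⟨S, T, hS, hT, hST⟩ := h
  let ⟨S', T', hS', hT', hST'⟩ := h'
  ⟨S + S', T + T', hS.add hS', hT.add hT', hST.add hST'⟩

theorem Equidecomposable.exists_splits_add {M N : Multiset (DimGen L)} {g : DimGen L}
    (h : Equidecomposable (M + N) {g}) :
    ∃ c A B, Splits g c ∧ (c : Multiset (DimGen L)) = A + B ∧
      dimSum M = dimSum A ∧ dimSum N = dimSum B := by
  obtain ⟨S, T, hS, hT, hST⟩ := h
  obtain ⟨c, T', hc, hT', rfl⟩ := subdivision_cons_left.1 hT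
  rw [subdivision_zero_left.1 hT', add_zero] at hST
  obtain ⟨SM, SN, hM, hN, rfl⟩ := subdivision_add_left.1 hS
  obtain ⟨A, B, hA, hB, hAB⟩ := Multiset.rel_add_left.1 hST
  exact ⟨c, A, B, hc, hAB, hM.dimSum_eq.trans (dimSum_eq_of_rel_projective hA),
    hN.dimSum_eq.trans (dimSum_eq_of_rel_projective hB)⟩

def AlternatingChain (x y : L) (a b : DimMonoid L) : Prop :=
  ∃ n : ℕ, 0 < n ∧ ∃ w : ℕ → L,
    w 0 = x ∧ w (2 * n) = y ∧ (∀ i < 2 * n, w i ≤ w (i + 1)) ∧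
    a = ∑ i ∈ Finset.range n, dimDelta (w (2 * i)) (w (2 * i + 1)) ∧
    b = ∑ i ∈ Finset.range n, dimDelta (w (2 * i + 1)) (w (2 * i + 2))

theorem alternatingChain_self (x : L) : AlternatingChain x x 0 0 :=
  ⟨1, one_pos, fun _ => x, rfl, rfl, fun _ _ => le_rfl, by simp [dimDelta_self],
    by simp [dimDelta_self]⟩

theorem AlternatingChain.cons {x m z y : L} {a b : DimMonoid L} (hxm : x ≤ m) (hmz : m ≤ z)
    (h : AlternatingChain z y a b) :
    AlternatingChain x y (dimDelta x m + a) (dimDelta m z + b) := by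
  obtain ⟨n, -, w, rfl, hy, hw, rfl, rfl⟩ := h
  refine ⟨n + 1, n.succ_pos, fun | 0 => x | 1 => m | j + 2 => w j, rfl, hy, ?_, ?_, ?_⟩
  · rintro (_ | _ | i) hi
    · exact hxm
    · exact hmz
    · exact hw i (by omega)
  · rw [Finset.sum_range_succ', add_comm]
    rfl
  · rw [Finset.sum_range_succ', add_comm]
    rfl

theorem ChainLinks.alternatingChain {x y : L} {c : List (DimGen L)} (hc : ChainLinks x y c)
    {A B : Multiset (DimGen L)} (hAB : (c : Multiset (DimGen L)) = A + B) :
    AlternatingChain x y (dimSum A) (dimSum B) := by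
  induction hc generalizing A B with
  | nil x =>
    obtain ⟨rfl, rfl⟩ := add_eq_zero.1 hAB.symm
    simpa using alternatingChain_self x
  | @cons x m z hxm l hl ih =>
    rw [← Multiset.cons_coe] at hAB
    have hmem : ⟨(x, m), hxm⟩ ∈ A + B := hAB ▸ Multiset.mem_cons_self _ _
    -- the link `[x, m]` is an `a`-step followed by a trivial `b`-step, or the other way round
    rcases Multiset.mem_add.1 hmem with hA | hB
    · obtain ⟨A, rfl⟩ := Multiset.exists_cons_of_mem hA
      rw [Multiset.cons_add, Multiset.cons_inj_right] at hAB
      simpa [dimSum_cons, dimDelta_self] using (ih hAB).cons hxm le_rfl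
    · obtain ⟨B, rfl⟩ := Multiset.exists_cons_of_mem hB
      rw [Multiset.add_cons, Multiset.cons_inj_right] at hAB
      simpa [dimSum_cons, dimDelta_self] using (ih hAB).cons le_rfl hxm

end Lattice

section Modular

variable {L : Type*} [Lattice L] [IsModularLattice L]

theorem ChainLinks.exists_sup {p q : L} {c : List (DimGen L)} (hc : ChainLinks p q c) {y : L}
    (hy : q ⊓ y ≤ p) :
    ∃ d, ChainLinks (p ⊔ y) (q ⊔ y) d ∧
      Multiset.Rel Projective (c : Multiset (DimGen L)) d := by
  induction hc with
  | nil => exact ⟨[], .nil _, .zero⟩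
  | @cons p m q hpm l hl ih =>
    obtain ⟨d, hd, hcd⟩ := ih (hy.trans hpm)
    have hpersp :
        Perspective ⟨(p, m), hpm⟩ ⟨(p ⊔ y, m ⊔ y), sup_le_sup_right hpm y⟩ := by
      constructor
      · show m ⊓ (p ⊔ y) = p
        rw [inf_comm, sup_inf_assoc_of_le y hpm, sup_eq_left, inf_comm]
        exact (inf_le_inf_right y hl.le).trans hy
      · show m ⊔ (p ⊔ y) = m ⊔ y
        rw [← sup_assoc, sup_eq_left.2 hpm]
    exact ⟨_, .cons _ hd, hcd.cons (.single (.of_rel hpersp))⟩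

theorem ChainLinks.exists_inf {p q : L} {c : List (DimGen L)} (hc : ChainLinks p q c) {x : L}
    (hx : q ≤ x ⊔ p) :
    ∃ d, ChainLinks (p ⊓ x) (q ⊓ x) d ∧
      Multiset.Rel Projective (c : Multiset (DimGen L)) d := by
  induction hc with
  | nil => exact ⟨[], .nil _, .zero⟩
  | @cons p m q hpm l hl ih =>
    obtain ⟨d, hd, hcd⟩ := ih (hx.trans (sup_le_sup_left hpm x))
    have hpersp :
        Perspective ⟨(p ⊓ x, m ⊓ x), inf_le_inf_right x hpm⟩ ⟨(p, m), hpm⟩ := by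
      constructor
      · show m ⊓ x ⊓ p = p ⊓ x
        rw [inf_right_comm, inf_eq_right.2 hpm]
      · show m ⊓ x ⊔ p = m
        rw [inf_sup_assoc_of_le x hpm, inf_eq_left]
        exact hl.le.trans hx
    exact ⟨_, .cons _ hd, hcd.cons (.single (.of_rel_symm hpersp))⟩

theorem exists_splits_of_symmGen_perspective {g h : DimGen L}
    (hgh : Relation.SymmGen Perspective g h)
    {c : List (DimGen L)} (hc : Splits g c) :
    ∃ d, Splits h d ∧ Multiset.Rel Projective (c : Multiset (DimGen L)) d := by
  rcases hgh with hp | hp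
  · obtain ⟨d, hd, hcd⟩ := ChainLinks.exists_sup hc hp.1.le
    rw [sup_eq_right.2 (hp.1 ▸ inf_le_right), hp.2] at hd
    exact ⟨d, hd, hcd⟩
  · obtain ⟨d, hd, hcd⟩ := ChainLinks.exists_inf hc hp.2.ge
    rw [inf_comm, hp.1, inf_eq_right.2 (hp.2 ▸ le_sup_left)] at hd
    exact ⟨d, hd, hcd⟩

theorem Projective.exists_splits {g h : DimGen L} (hgh : Projective g h) {c : List (DimGen L)}
    (hc : Splits g c) :
    ∃ d, Splits h d ∧ Multiset.Rel Projective (c : Multiset (DimGen L)) d := by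
  induction hgh with
  | refl => exact ⟨c, hc, Multiset.rel_refl _ _⟩
  | tail _ hp ih =>
    obtain ⟨d, hd, hcd⟩ := ih
    obtain ⟨e, he, hde⟩ := exists_splits_of_symmGen_perspective hp hd
    exact ⟨e, he, hcd.trans _ hde⟩

theorem exists_subdivision_of_rel_projective {S T T₂ : Multiset (DimGen L)}
    (h : Multiset.Rel Projective S T) (hT : Subdivision T T₂) :
    ∃ S₂, Subdivision S S₂ ∧ Multiset.Rel Projective S₂ T₂ := by
  induction h generalizing T₂ with
  | zero => exact ⟨0, .zero, by rw [subdivision_zero_left.1 hT]; exact .zero⟩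
  | cons hab _ ih =>
    obtain ⟨c, T', hc, hT', rfl⟩ := subdivision_cons_left.1 hT
    obtain ⟨d, hd, hcd⟩ := Projective.exists_splits (symm hab) hc
    obtain ⟨S', hS', hST'⟩ := ih hT'
    exact ⟨(d : Multiset (DimGen L)) + S', hS'.cons hd, hcd.symm.add hST'⟩

theorem ChainLinks.exists_cut {p q : L} {c : List (DimGen L)} (hc : ChainLinks p q c) {m : L}
    (hm : m ≤ q) :
    ∃ cl ch S, ChainLinks (p ⊓ m) m cl ∧ ChainLinks (p ⊔ m) q ch ∧
      Subdivision (c : Multiset (DimGen L)) S ∧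
      Multiset.Rel Projective
        ((cl : Multiset (DimGen L)) + (ch : Multiset (DimGen L))) S := by
  induction hc with
  | nil x =>
    refine ⟨[], [], 0, ?_, ?_, .zero, .zero⟩
    · rw [inf_eq_right.2 hm]; exact .nil m
    · rw [sup_eq_left.2 hm]; exact .nil x
  | @cons p d q hpd l hl ih =>
    obtain ⟨cl, ch, S, hcl, hch, hS, hrel⟩ := ih hm
    have hpe : p ≤ p ⊔ d ⊓ m := le_sup_left
    have hed : p ⊔ d ⊓ m ≤ d := sup_le hpd inf_le_left
    -- cut `[p, d]` at `p ⊔ d ⊓ m`; the halves transpose to `[p ⊓ m, d ⊓ m]`, `[p ⊔ m, d ⊔ m]`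
    have hlow : Perspective ⟨(p ⊓ m, d ⊓ m), inf_le_inf_right m hpd⟩
        ⟨(p, p ⊔ d ⊓ m), hpe⟩ := by
      refine ⟨?_, sup_comm _ _⟩
      show d ⊓ m ⊓ p = p ⊓ m
      rw [inf_right_comm, inf_eq_right.2 hpd]
    have hhigh : Perspective ⟨(p ⊔ d ⊓ m, d), hed⟩
        ⟨(p ⊔ m, d ⊔ m), sup_le_sup_right hpd m⟩ := by
      constructor
      · show d ⊓ (p ⊔ m) = p ⊔ d ⊓ m
        rw [inf_comm, sup_inf_assoc_of_le m hpd, inf_comm]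
      · show d ⊔ (p ⊔ m) = d ⊔ m
        rw [← sup_assoc, sup_eq_left.2 hpd]
    refine ⟨_, _, _, .cons (inf_le_inf_right m hpd) hcl, .cons (sup_le_sup_right hpd m) hch,
      hS.cons (g := ⟨(p, d), hpd⟩) (.cons hpe (.cons hed (.nil d))), ?_⟩
    simp only [← Multiset.cons_coe, Multiset.coe_nil, Multiset.cons_add, zero_add]
    rw [Multiset.add_cons]
    exact (hrel.cons (.single (.of_rel_symm hhigh))).cons (.single (.of_rel hlow))

theorem ChainLinks.exists_common_refinement {p q : L} {c₁ c₂ : List (DimGen L)}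
    (h₁ : ChainLinks p q c₁) (h₂ : ChainLinks p q c₂) :
    ∃ S₁ S₂, Subdivision (c₁ : Multiset (DimGen L)) S₁ ∧
      Subdivision (c₂ : Multiset (DimGen L)) S₂ ∧ Multiset.Rel Projective S₁ S₂ := by
  induction h₁ generalizing c₂ with
  | nil x => exact ⟨0, 0, .zero, h₂.subdivision_zero le_rfl, .zero⟩
  | @cons p m q hpm l hl ih =>
    obtain ⟨cl, ch, S, hcl, hch, hS, hrel⟩ := h₂.exists_cut hl.le
    rw [inf_eq_left.2 hpm] at hcl
    rw [sup_eq_right.2 hpm] at hch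
    obtain ⟨T₁, T, hT₁, hT, hrelT⟩ := ih hch
    obtain ⟨S', hS', hrel'⟩ :=
      exists_subdivision_of_rel_projective hrel.symm ((Subdivision.refl cl).add hT)
    exact ⟨(cl : Multiset (DimGen L)) + T₁, S', hT₁.cons (g := ⟨(p, m), hpm⟩) hcl,
      hS.trans hS', ((Multiset.rel_refl _ _).add hrelT).trans _ hrel'.symm⟩

theorem Subdivision.exists_common_refinement {N S S' : Multiset (DimGen L)}
    (h : Subdivision N S) (h' : Subdivision N S') :
    ∃ T T', Subdivision S T ∧ Subdivision S' T' ∧ Multiset.Rel Projective T T' := by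
  induction N using Multiset.induction_on generalizing S S' with
  | empty =>
    rw [subdivision_zero_left.1 h, subdivision_zero_left.1 h']
    exact ⟨0, 0, .zero, .zero, .zero⟩
  | cons g N ih =>
    obtain ⟨c, S₀, hc, hS₀, rfl⟩ := subdivision_cons_left.1 h
    obtain ⟨c', S₀', hc', hS₀', rfl⟩ := subdivision_cons_left.1 h'
    obtain ⟨T, T', hT, hT', hTT'⟩ := ChainLinks.exists_common_refinement hc hc'
    obtain ⟨U, U', hU, hU', hUU'⟩ := ih hS₀ hS₀'
    exact ⟨T + U, T' + U', hT.add hU, hT'.add hU', hTT'.add hUU'⟩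

theorem Equidecomposable.trans {M N P : Multiset (DimGen L)} (h : Equidecomposable M N)
    (h' : Equidecomposable N P) : Equidecomposable M P := by
  obtain ⟨SM, SN, hM, hN, hMN⟩ := h
  obtain ⟨SN', SP, hN', hP, hNP⟩ := h'
  obtain ⟨T, T', hT, hT', hTT'⟩ := hN.exists_common_refinement hN'
  obtain ⟨SM₂, hSM₂, hM₂⟩ := exists_subdivision_of_rel_projective hMN hT
  obtain ⟨SP₂, hSP₂, hP₂⟩ := exists_subdivision_of_rel_projective hNP.symm hT'
  exact ⟨SM₂, SP₂, hM.trans hSM₂, hP.trans hSP₂,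
    (hM₂.trans _ hTT').trans _ hP₂.symm⟩

variable (L) in
def equidecomposableCon : AddCon (DimFree L) where
  r γ δ := Equidecomposable (Finsupp.toMultiset γ) (Finsupp.toMultiset δ)
  iseqv := ⟨fun _ => .refl _, Equidecomposable.symm, Equidecomposable.trans⟩
  add' h h' := by simpa only [map_add] using h.add h'

theorem dimCon_le_equidecomposableCon : DimCon L ≤ equidecomposableCon L := by
  refine AddCon.addConGen_le.2 fun γ δ h => ?_
  show Equidecomposable _ _
  cases h with
  | d0 x =>
    simp only [map_zero, Finsupp.toMultiset_single, one_nsmul]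
    exact ⟨0, 0, by simpa using Subdivision.zero.cons (g := ⟨(x, x), le_rfl⟩) (.nil x),
      .zero, .zero⟩
  | d1 x y z hxy hyz =>
    simp only [map_add, Finsupp.toMultiset_single, one_nsmul]
    exact ⟨_, _, Subdivision.zero.cons (g := ⟨(x, z), hxy.trans hyz⟩)
      (.cons hxy (.cons hyz (.nil z))), .refl _, Multiset.rel_refl _ _⟩
  | d2 x y =>
    simp only [Finsupp.toMultiset_single, one_nsmul]
    exact ⟨_, _, .refl _, .refl _, .cons (.single (.of_rel ⟨rfl, rfl⟩)) .zero⟩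

end Modular

/-- **Lemma 1.3.** In a modular lattice, any decomposition `a + b = Δ(u,v)` in the
dimension monoid is realized by a finite chain from `u` to `v` whose alternating
links sum up to `a` and `b` respectively. -/
theorem dim_decomposition_of_modular {L : Type*} [Lattice L] [IsModularLattice L]
    {u v : L} (huv : u ≤ v) (a b : DimMonoid L) (h : a + b = dimDelta u v) :
    ∃ n : ℕ, 0 < n ∧ ∃ w : ℕ → L,
      w 0 = u ∧ w (2 * n) = v ∧ (∀ i < 2 * n, w i ≤ w (i + 1)) ∧
      a = ∑ i ∈ Finset.range n, dimDelta (w (2 * i)) (w (2 * i + 1)) ∧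
      b = ∑ i ∈ Finset.range n, dimDelta (w (2 * i + 1)) (w (2 * i + 2)) := by
  obtain ⟨α, rfl⟩ := (DimCon L).mk'_surjective a
  obtain ⟨β, rfl⟩ := (DimCon L).mk'_surjective b
  have hcon : DimCon L (α + β) (Finsupp.single ⟨(u, v), huv⟩ 1) :=
    (AddCon.eq _).1 ((map_add _ α β).trans (h.trans (dimCon_mk'_single_of_le huv).symm))
  have hequi : Equidecomposable (Finsupp.toMultiset (α + β))
      (Finsupp.toMultiset (Finsupp.single ⟨(u, v), huv⟩ 1)) :=
    dimCon_le_equidecomposableCon hcon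
  rw [map_add, Finsupp.toMultiset_single, one_nsmul] at hequi
  obtain ⟨c, A, B, hc, hAB, hA, hB⟩ := hequi.exists_splits_add
  rw [← dimSum_toMultiset α, ← dimSum_toMultiset β, hA, hB]
  exact ChainLinks.alternatingChain hc hAB
end

section
/- (Lázár's free set theorem, as used in the paper.) Let X be a set of cardinality at least ℵ₂ and let Φ : X → Finset X assign a finite subset of X to each element of X. Then there exists a subset Y of X of cardinality exactly ℵ₂ such that η ∉ Φ(ξ) for all distinct ξ, η ∈ Y. -/
universe u

/-!
Index `κ` points of `X` by the well-order `κ.ord.ToType`, for a regular uncountable `κ`, and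
let `u x` be a strict upper bound of the finite set `Φ x`. A pressing-down argument over the
closure points of `u` gives `γ` such that cofinally many closure points `δ > γ` satisfy
`Φ δ ∩ Iio δ ⊆ Iic γ`. Two such points `δ < δ'` are independent: `δ' ∉ Φ δ` since
`u δ < δ'`, and `δ ∉ Φ δ'` since `γ < δ`. A cofinal set has cardinality `κ`.
-/

open Cardinal Order Set

namespace Order

variable {α : Type*} [LinearOrder α]

theorem exists_forall_lt_of_mk_lt_cof {s : Set α} (hs : #s < cof α) : ∃ x, ∀ y ∈ s, y < x :=
  not_isCofinal_iff.1 fun h => (cof_le h).not_gt hs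

def IsClosurePoint (f : α → α) (δ : α) : Prop :=
  ∀ γ < δ, f γ < δ

variable [WellFoundedLT α] [IsRegularCardinalOrder α]

theorem exists_isClosurePoint_gt (hα : ℵ₀ < cof α) (f : α → α) (a : α) :
    ∃ δ, a < δ ∧ IsClosurePoint f δ := by
  -- regularity makes `Iio β` small, so `g β` can bound `β` and all of `f '' Iio β`
  have hstep (β : α) : ∃ x, ∀ y ∈ insert β (f '' Iio β), y < x := by
    refine exists_forall_lt_of_mk_lt_cof (mk_insert_le.trans_lt (add_one_lt_of_lt hα.le ?_))
    rw [cof_eq_cardinalMk]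
    exact mk_image_le.trans_lt (mk_Iio_lt β ord_cardinalMk)
  choose g hg using hstep
  have hlt (β : α) : β < g β := hg β β (mem_insert _ _)
  set b : ℕ → α := fun n => g^[n] a
  have hb (n : ℕ) : b (n + 1) = g (b n) := Function.iterate_succ_apply' g n a
  obtain ⟨c, hc⟩ := exists_forall_lt_of_mk_lt_cof (s := range b)
    ((le_aleph0_iff_set_countable.2 (countable_range b)).trans_lt hα)
  obtain ⟨δ, hδ, hδmin⟩ := wellFounded_lt.has_min {x | ∀ n, b n < x}
    ⟨c, fun n => hc _ (mem_range_self n)⟩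
  refine ⟨δ, hδ 0, fun γ hγ => ?_⟩
  obtain ⟨n, hγn⟩ : ∃ n, γ ≤ b n := by
    by_contra! h
    exact hδmin γ h hγ
  calc f γ < b (n + 2) := by
        rw [hb]
        exact hg _ _ (mem_insert_of_mem _ (mem_image_of_mem f (hγn.trans_lt (hb n ▸ hlt _))))
    _ < δ := hδ _

theorem exists_isCofinal_isClosurePoint_forall_le (hα : ℵ₀ < cof α) (f : α → α)
    (Φ : α → Finset α) : ∃ γ, IsCofinal {δ | IsClosurePoint f δ ∧ ∀ x ∈ Φ δ, x < δ → x ≤ γ} := by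
  -- otherwise `bound γ` bounds the set for `γ`; at a closure point `δ` of `f ⊔ bound`, taking
  -- `γ < δ` above `Φ δ ∩ Iio δ` puts `δ` in that set, contradicting `bound γ < δ`
  by_contra! h
  choose bound hbound using fun γ => not_isCofinal_iff.1 (h γ)
  obtain ⟨a⟩ : Nonempty α := cof_ne_zero_iff.1 (aleph0_pos.trans hα).ne'
  obtain ⟨δ, haδ, hδ⟩ := exists_isClosurePoint_gt hα (f ⊔ bound) a
  set s := insert a ((Φ δ).filter (· < δ))
  have hγδ : s.max' (Finset.insert_nonempty _ _) < δ := by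
    simp [s, Finset.max'_lt_iff, haδ]
  refine (hbound _ δ ⟨fun β hβ => le_sup_left.trans_lt (hδ β hβ), fun x hx hxδ => ?_⟩).not_gt
    (le_sup_right.trans_lt (hδ _ hγδ))
  exact s.le_max' x (by simp [s, hx, hxδ])

theorem exists_isCofinal_forall_notMem (hα : ℵ₀ < cof α) (Φ : α → Finset α) :
    ∃ S : Set α, IsCofinal S ∧ ∀ x ∈ S, ∀ y ∈ S, x ≠ y → y ∉ Φ x := by
  choose u hu using fun x => exists_forall_lt_of_mk_lt_cof (s := (Φ x : Set α))
    ((Φ x).finite_toSet.lt_aleph0.trans hα)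
  obtain ⟨γ, hγ⟩ := exists_isCofinal_isClosurePoint_forall_le hα u Φ
  refine ⟨{δ | IsClosurePoint u δ ∧ ∀ x ∈ Φ δ, x < δ → x ≤ γ} ∩ Ioi γ, fun a => ?_, ?_⟩
  · obtain ⟨c, hc⟩ := exists_forall_lt_of_mk_lt_cof (s := {a, γ})
      ((toFinite _).lt_aleph0.trans hα)
    obtain ⟨δ, hδ, hcδ⟩ := hγ c
    exact ⟨δ, ⟨hδ, (hc γ (by simp)).trans_le hcδ⟩, (hc a (by simp)).le.trans hcδ⟩
  · rintro x ⟨⟨-, hxΦ⟩, -⟩ y ⟨⟨hyu, -⟩, hγy⟩ hxy hyx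
    rcases hxy.lt_or_gt with h | h
    · exact (hu x y hyx).not_gt (hyu x h)
    · exact (hxΦ y hyx h).not_gt hγy

end Order

namespace Cardinal

theorem IsRegular.isRegularCardinalOrder_toType {κ : Cardinal} (hκ : κ.IsRegular) :
    IsRegularCardinalOrder κ.ord.ToType :=
  ⟨by rw [Ordinal.type_toType, Ordinal.cof_toType, hκ.cof_ord]⟩

theorem exists_free_set_of_isRegular {X : Type u} {κ : Cardinal.{u}} (hκ : κ.IsRegular)
    (hκ₀ : ℵ₀ < κ) (hX : κ ≤ #X) (Φ : X → Finset X) :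
    ∃ Y : Set X, #Y = κ ∧ ∀ ξ ∈ Y, ∀ η ∈ Y, ξ ≠ η → η ∉ Φ ξ := by
  have := hκ.isRegularCardinalOrder_toType
  have hcof : cof κ.ord.ToType = κ := by rw [Ordinal.cof_toType, hκ.cof_ord]
  obtain ⟨e⟩ : Nonempty (κ.ord.ToType ↪ X) := by rwa [← le_def, mk_ord_toType]
  obtain ⟨S, hScof, hSfree⟩ := exists_isCofinal_forall_notMem (hcof.symm ▸ hκ₀)
    fun i => (Φ (e i)).preimage e e.injective.injOn
  have hS : κ ≤ #(e '' S) := by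
    rw [mk_image_eq e.injective]
    exact hcof.ge.trans (cof_le hScof)
  obtain ⟨Y, hYS, hY⟩ := le_mk_iff_exists_subset.1 hS
  refine ⟨Y, hY, fun ξ hξ η hη hne hmem => ?_⟩
  obtain ⟨i, hi, rfl⟩ := hYS hξ
  obtain ⟨j, hj, rfl⟩ := hYS hη
  exact hSfree i hi j hj (ne_of_apply_ne e hne) (by simpa using hmem)

end Cardinal

/-- **Lázár's free set theorem.** If `|X| ≥ ℵ₂` and `Φ` assigns a finite subset of `X`
to each element of `X`, then there is `Y ⊆ X` with `|Y| = ℵ₂` such that `η ∉ Φ(ξ)`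
for all distinct `ξ, η ∈ Y`. -/
theorem lazar_free_set {X : Type u} (hX : Cardinal.aleph 2 ≤ Cardinal.mk X)
    (Φ : X → Finset X) :
    ∃ Y : Set X, Cardinal.mk Y = Cardinal.aleph 2 ∧
      ∀ ξ ∈ Y, ∀ η ∈ Y, ξ ≠ η → η ∉ Φ ξ :=
  Cardinal.exists_free_set_of_isRegular
    (by simpa [one_add_one_eq_two] using Cardinal.isRegular_aleph_add_one 1) (by simp) hX Φ
end

section
/- (Kuratowski's free set theorem for pairs, as used in the paper.) Let X be a set of cardinality at least ℵ₂ and let Ψ be a map assigning to each 2-element subset of X a finite subset of X. Then there exist pairwise distinct elements α, β, γ ∈ X such that α ∉ Ψ({β,γ}), β ∉ Ψ({α,γ}), and γ ∉ Ψ({α,β}). -/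
universe u

open Cardinal Set

private lemma kfs_closure_exists {X : Type u} (Ψ : X → X → Finset X)
    (hX : Cardinal.aleph 1 ≤ Cardinal.mk X) :
    ∃ T : Set X, Cardinal.mk T ≤ Cardinal.aleph 1 ∧ Cardinal.aleph 1 ≤ Cardinal.mk T ∧
      ∀ a b : X, a ∈ T → b ∈ T → ↑(Ψ a b) ⊆ T := by
  obtain ⟨S₀, hS₀⟩ := Cardinal.le_mk_iff_exists_set.mp hX
  set F : Set X → Set X := fun S => S ∪ ⋃ p : S × S, ↑(Ψ p.1.1 p.2.1) with hF
  set Z : ℕ → Set X := fun n => F^[n] S₀ with hZ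
  have hsub : ∀ S : Set X, S ⊆ F S := fun S => Set.subset_union_left
  have hZsucc : ∀ n, Z (n + 1) = F (Z n) := by
    intro n; simp [hZ, Function.iterate_succ_apply']
  have hmono : Monotone Z := by
    apply monotone_nat_of_le_succ
    intro n; rw [hZsucc]; exact hsub _
  -- cardinality of one step
  have hFcard : ∀ S : Set X, #S ≤ Cardinal.aleph 1 → #(F S) ≤ Cardinal.aleph 1 := by
    intro S hS
    have h1 : #(⋃ p : S × S, (↑(Ψ p.1.1 p.2.1) : Set X)) ≤ Cardinal.aleph 1 := by
      refine le_trans (Cardinal.mk_iUnion_le_sum_mk) ?_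
      refine le_trans (Cardinal.sum_le_sum _ (fun _ => (ℵ₀ : Cardinal.{u})) ?_) ?_
      · intro p
        exact Cardinal.mk_le_aleph0
      · rw [Cardinal.sum_const']
        have hprod : #(↥S × ↥S) ≤ Cardinal.aleph 1 := by
          rw [Cardinal.mk_prod]
          simp only [Cardinal.lift_id]
          calc #S * #S ≤ Cardinal.aleph 1 * Cardinal.aleph 1 :=
                mul_le_mul' hS hS
            _ = Cardinal.aleph 1 := Cardinal.mul_eq_self (Cardinal.aleph0_le_aleph 1)
        calc #(↥S × ↥S) * ℵ₀ ≤ Cardinal.aleph 1 * Cardinal.aleph 1 :=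
              mul_le_mul' hprod (Cardinal.aleph0_le_aleph 1)
          _ = Cardinal.aleph 1 := Cardinal.mul_eq_self (Cardinal.aleph0_le_aleph 1)
    refine le_trans (Cardinal.mk_union_le _ _) ?_
    have := add_le_add hS h1
    refine le_trans this ?_
    rw [Cardinal.add_eq_self (Cardinal.aleph0_le_aleph 1)]
  have hZcard : ∀ n, #(Z n) ≤ Cardinal.aleph 1 := by
    intro n
    induction n with
    | zero => simp [hZ, hS₀]
    | succ n ih => rw [hZsucc]; exact hFcard _ ih
  refine ⟨⋃ n : ULift.{u} ℕ, Z n.down, ?_, ?_, ?_⟩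
  · refine le_trans (Cardinal.mk_iUnion_le _) ?_
    have h1 : #(ULift.{u} ℕ) ≤ Cardinal.aleph 1 :=
      le_trans Cardinal.mk_le_aleph0 (Cardinal.aleph0_le_aleph 1)
    have h2 : ⨆ n : ULift.{u} ℕ, #(Z n.down) ≤ Cardinal.aleph 1 :=
      ciSup_le' fun n => hZcard n.down
    calc #(ULift.{u} ℕ) * ⨆ n : ULift.{u} ℕ, #(Z n.down)
        ≤ Cardinal.aleph 1 * Cardinal.aleph 1 := mul_le_mul' h1 h2
      _ = Cardinal.aleph 1 := Cardinal.mul_eq_self (Cardinal.aleph0_le_aleph 1)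
  · have : S₀ ⊆ ⋃ n : ULift.{u} ℕ, Z n.down := by
      intro x hx
      exact Set.mem_iUnion.2 ⟨⟨0⟩, hx⟩
    calc Cardinal.aleph 1 = #S₀ := hS₀.symm
      _ ≤ _ := Cardinal.mk_le_mk_of_subset this
  · rintro a b ha hb x hx
    obtain ⟨m, ham⟩ := Set.mem_iUnion.1 ha
    obtain ⟨k, hbk⟩ := Set.mem_iUnion.1 hb
    have ha' : a ∈ Z (max m.down k.down) := hmono (le_max_left _ _) ham
    have hb' : b ∈ Z (max m.down k.down) := hmono (le_max_right _ _) hbk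
    refine Set.mem_iUnion.2 ⟨⟨max m.down k.down + 1⟩, ?_⟩
    rw [hZsucc]
    refine Set.mem_union_right _ ?_
    exact Set.mem_iUnion.2 ⟨(⟨a, ha'⟩, ⟨b, hb'⟩), hx⟩

private lemma kfs_pair_exists {X : Type u} (Ψ : X → X → Finset X) (T : Set X)
    (hT : Cardinal.aleph 1 ≤ Cardinal.mk T) (γ : X) :
    ∃ α ∈ T, ∃ β ∈ T, α ≠ β ∧ α ∉ Ψ β γ ∧ β ∉ Ψ α γ := by
  by_contra h
  push_neg at h
  -- h : ∀ α ∈ T, ∀ β ∈ T, α ≠ β → α ∉ Ψ β γ → β ∈ Ψ α γ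
  have hinf : Infinite T := by
    rw [← Cardinal.aleph0_le_mk_iff]
    exact le_trans (Cardinal.aleph0_le_aleph 1) hT
  let N : ℕ ↪ T := Infinite.natEmbedding T
  -- β ∈ T avoiding all exception sets
  set E : Set X := (⋃ n : ℕ, ((↑(Ψ (N n) γ) : Set X) ∪ {(N n : X)})) with hE
  have hEc : E.Countable := by
    refine Set.countable_iUnion fun n => ?_
    exact ((Ψ (N n) γ).finite_toSet.union (Set.finite_singleton _)).countable
  have hTE : ¬ T ⊆ E := by
    intro hsub
    have : #T ≤ ℵ₀ := by
      have := (hEc.mono hsub)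
      exact Cardinal.mk_le_aleph0_iff.2 this.to_subtype
    have h2 : Cardinal.aleph 1 ≤ ℵ₀ := le_trans hT this
    have h3 : (ℵ₀ : Cardinal) < Cardinal.aleph 1 := by
      rw [← Cardinal.aleph_zero]
      exact Cardinal.aleph_lt_aleph.2 (by norm_num)
    exact absurd h2 (not_le.2 h3)
  obtain ⟨β, hβT, hβE⟩ := Set.not_subset.1 hTE
  have hmem : ∀ n : ℕ, (N n : X) ∈ Ψ β γ := by
    intro n
    have hne : (N n : X) ≠ β := by
      intro he
      exact hβE (Set.mem_iUnion.2 ⟨n, Set.mem_union_right _ (by simp [he])⟩)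
    have hβnot : β ∉ (↑(Ψ (N n) γ) : Set X) := fun hc =>
      hβE (Set.mem_iUnion.2 ⟨n, Set.mem_union_left _ hc⟩)
    by_contra hc
    exact hβnot (h (N n) (N n).2 β hβT hne hc)
  have hinj : Function.Injective fun n : ℕ => (N n : X) :=
    fun a b hab => N.injective (Subtype.ext hab)
  have : ((↑(Ψ β γ) : Set X)).Infinite :=
    Set.infinite_of_injective_forall_mem hinj hmem
  exact this (Ψ β γ).finite_toSet

/-- **Kuratowski's free set theorem for pairs.** If `|X| ≥ ℵ₂` and `Ψ` assigns a finite
subset of `X` to each (unordered) pair of elements of `X`, then there are pairwise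
distinct `α, β, γ ∈ X`, each outside the value of `Ψ` at the other two. -/
theorem kuratowski_free_set {X : Type u} (hX : Cardinal.aleph 2 ≤ Cardinal.mk X)
    (Ψ : X → X → Finset X) (hsymm : ∀ x y, Ψ x y = Ψ y x) :
    ∃ α β γ : X, α ≠ β ∧ α ≠ γ ∧ β ≠ γ ∧
      α ∉ Ψ β γ ∧ β ∉ Ψ α γ ∧ γ ∉ Ψ α β := by
  have h12 : Cardinal.aleph 1 ≤ Cardinal.aleph 2 :=
    Cardinal.aleph_le_aleph.2 (by norm_num)
  obtain ⟨T, hT1, hT2, hTclosed⟩ := kfs_closure_exists Ψ (le_trans h12 hX)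
  -- pick γ outside T
  have hlt : #T < #X := lt_of_le_of_lt hT1
    (lt_of_lt_of_le (Cardinal.aleph_lt_aleph.2 (by norm_num)) hX)
  have : ∃ γ : X, γ ∉ T := by
    by_contra hc
    push_neg at hc
    have : T = Set.univ := Set.eq_univ_of_forall hc
    rw [this, Cardinal.mk_univ] at hlt
    exact lt_irrefl _ hlt
  obtain ⟨γ, hγ⟩ := this
  obtain ⟨α, hαT, β, hβT, hne, hαβγ, hβαγ⟩ := kfs_pair_exists Ψ T hT2 γ
  refine ⟨α, β, γ, hne, ?_, ?_, hαβγ, hβαγ, ?_⟩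
  · intro he; exact hγ (he ▸ hαT)
  · intro he; exact hγ (he ▸ hβT)
  · intro hc
    exact hγ (hTclosed α β hαT hβT hc)
end

section
/- Let X be a set and let (F_X, ē) be as defined below; it realizes the pointed partially ordered abelian group E(X) presented by generators a_ξ (ξ ∈ X) and relations 0 ≤ a_ξ ≤ ē. Precisely: for every partially ordered abelian group G, every e ∈ G with e ≥ 0, and every family a : X → G with 0 ≤ a(ξ) ≤ e for all ξ, there exists a unique order-preserving group homomorphism f : F_X → G such that f(ē) = e and f(ā_ξ) = a(ξ) for all ξ ∈ X. -/
/-- The constant function `1` on the powerset of `X`. -/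
def eBar (X : Type*) : Set X → ℤ := fun _ => 1

/-- The characteristic function of `{Y ⊆ X : ξ ∈ Y}`. -/
noncomputable def aBar {X : Type*} (ξ : X) : Set X → ℤ :=
  Set.indicator {Y : Set X | ξ ∈ Y} fun _ => 1

/-- The subgroup of `Set X → ℤ` generated by `ē` and the `ā_ξ`, ordered componentwise. -/
noncomputable def FX (X : Type*) : AddSubgroup (Set X → ℤ) :=
  AddSubgroup.closure ({eBar X} ∪ Set.range (aBar (X := X)))

/-- `ē` as an element of `F_X`. -/
noncomputable def eElem (X : Type*) : FX X :=
  ⟨eBar X, AddSubgroup.subset_closure (Set.mem_union_left _ rfl)⟩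

/-- `ā_ξ` as an element of `F_X`. -/
noncomputable def aElem {X : Type*} (ξ : X) : FX X :=
  ⟨aBar ξ, AddSubgroup.subset_closure (Set.mem_union_right _ ⟨ξ, rfl⟩)⟩

universe u v

/-!
The functions `ē` and `ā_ξ` are `ℤ`-linearly independent (evaluate at `∅` and at the singletons),
so `(n, c) ↦ n • ē + ∑ c ξ • ā_ξ` identifies `ℤ × (X →₀ ℤ)` with `F_X`, and the homomorphism is
forced to be `n • ē + ∑ c ξ • ā_ξ ↦ n • e + ∑ c ξ • a ξ`. It is positive: evaluating a nonnegative
element at `Y = {ξ | c ξ < 0}` gives `n + ∑ min (c ξ) 0 ≥ 0`, while `0 ≤ a ξ ≤ e` gives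
`min (c ξ) 0 • e ≤ c ξ • a ξ` termwise.
-/

theorem min_zsmul_le_zsmul {G : Type*} [AddCommGroup G] [PartialOrder G] [IsOrderedAddMonoid G]
    {x y : G} (hy : 0 ≤ y) (hyx : y ≤ x) (k : ℤ) :
    min k 0 • x ≤ k • y := by
  rcases le_total k 0 with hk | hk
  · rw [min_eq_left hk]
    have := zsmul_nonneg (sub_nonneg.2 hyx) (neg_nonneg.2 hk)
    rwa [neg_smul, smul_sub, neg_sub, sub_nonneg] at this
  · rw [min_eq_right hk, zero_smul]
    exact zsmul_nonneg hy hk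

namespace FX

variable {X : Type u}

section Combination

variable {M : Type v} [AddCommGroup M]

noncomputable def combination (x : M) (y : X → M) : ℤ × (X →₀ ℤ) →+ M :=
  (zmultiplesHom M x).coprod (Finsupp.linearCombination ℤ y).toAddMonoidHom

theorem combination_apply (x : M) (y : X → M) (n : ℤ) (c : X →₀ ℤ) :
    combination x y (n, c) = n • x + c.sum fun ξ k => k • y ξ := by
  simp [combination, Finsupp.linearCombination_apply]

theorem range_combination (x : M) (y : X → M) :
    (combination x y).range = AddSubgroup.closure ({x} ∪ Set.range y) := by
  apply le_antisymm
  · rintro _ ⟨⟨n, c⟩, rfl⟩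
    have hx : x ∈ AddSubgroup.closure ({x} ∪ Set.range y) :=
      AddSubgroup.subset_closure (Set.mem_union_left _ rfl)
    have hy (ξ : X) : y ξ ∈ AddSubgroup.closure ({x} ∪ Set.range y) :=
      AddSubgroup.subset_closure (Set.mem_union_right _ ⟨ξ, rfl⟩)
    rw [combination_apply]
    exact add_mem (zsmul_mem hx n)
      (AddSubmonoidClass.finsuppSum_mem _ _ _ fun ξ _ => zsmul_mem (hy ξ) _)
  · rw [AddSubgroup.closure_le]
    rintro _ (rfl | ⟨ξ, rfl⟩)
    · exact ⟨(1, 0), by simp [combination_apply]⟩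
    · exact ⟨(0, Finsupp.single ξ 1), by simp [combination_apply]⟩

end Combination

open Classical in
theorem combination_eBar_aBar_apply (n : ℤ) (c : X →₀ ℤ) (Y : Set X) :
    combination (eBar X) aBar (n, c) Y = n + c.sum fun ξ k => if ξ ∈ Y then k else 0 := by
  simp [combination_apply, Finsupp.sum, Finset.sum_apply, eBar, aBar, Set.indicator_apply]

theorem combination_eBar_aBar_apply_empty (n : ℤ) (c : X →₀ ℤ) :
    combination (eBar X) aBar (n, c) ∅ = n := by
  simp [combination_eBar_aBar_apply]

theorem combination_eBar_aBar_apply_singleton (n : ℤ) (c : X →₀ ℤ) (ξ : X) :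
    combination (eBar X) aBar (n, c) {ξ} = n + c ξ := by
  classical
  simp_rw [combination_eBar_aBar_apply, Set.mem_singleton_iff, Finsupp.sum_ite_self_eq']

theorem combination_eBar_aBar_injective :
    Function.Injective (combination (eBar X) aBar) := by
  rintro ⟨n, c⟩ ⟨m, d⟩ h
  have hnm : n = m := by
    simpa only [combination_eBar_aBar_apply_empty] using congrFun h ∅
  subst hnm
  refine Prod.ext rfl (Finsupp.ext fun ξ => ?_)
  simpa only [combination_eBar_aBar_apply_singleton, add_right_inj] using congrFun h {ξ}

noncomputable def equivProd : ℤ × (X →₀ ℤ) ≃+ FX X :=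
  (AddMonoidHom.ofInjective combination_eBar_aBar_injective).trans
    (AddEquiv.addSubgroupCongr (range_combination _ _))

theorem coe_equivProd (p : ℤ × (X →₀ ℤ)) :
    (equivProd p : Set X → ℤ) = combination (eBar X) aBar p :=
  rfl

theorem equivProd_one_zero : equivProd (1, 0) = eElem X :=
  Subtype.ext (by simp [coe_equivProd, combination_apply, eElem])

theorem equivProd_zero_single (ξ : X) : equivProd (0, Finsupp.single ξ 1) = aElem ξ :=
  Subtype.ext (by simp [coe_equivProd, combination_apply, aElem])

theorem addMonoidHom_ext {G : Type v} [AddGroup G] {f g : FX X →+ G}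
    (he : f (eElem X) = g (eElem X)) (ha : ∀ ξ, f (aElem ξ) = g (aElem ξ)) : f = g := by
  refine AddMonoidHom.eq_of_eqOn_dense AddSubgroup.closure_closure_coe_preimage ?_
  rintro u (hu | ⟨ξ, hu⟩)
  · obtain rfl : u = eElem X := Subtype.ext hu
    exact he
  · obtain rfl : u = aElem ξ := Subtype.ext hu.symm
    exact ha ξ

theorem combination_nonneg_of_nonneg {G : Type v} [AddCommGroup G] [PartialOrder G]
    [IsOrderedAddMonoid G] {e : G} (he : 0 ≤ e) {a : X → G} (ha : ∀ ξ, 0 ≤ a ξ ∧ a ξ ≤ e)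
    (p : ℤ × (X →₀ ℤ)) (hp : 0 ≤ combination (eBar X) aBar p) : 0 ≤ combination e a p := by
  obtain ⟨n, c⟩ := p
  have hneg : 0 ≤ n + c.sum fun _ k => min k 0 := by
    classical
    calc 0 ≤ combination (eBar X) aBar (n, c) {ξ | c ξ < 0} := hp _
      _ = n + c.sum fun _ k => min k 0 := by
        rw [combination_eBar_aBar_apply]
        refine congrArg (n + ·) (Finsupp.sum_congr fun ξ _ => ?_)
        by_cases h : c ξ < 0
        · simp [h, h.le]
        · simp [h, not_lt.1 h]
  calc 0 ≤ (n + c.sum fun _ k => min k 0) • e := zsmul_nonneg he hneg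
    _ = n • e + c.sum fun _ k => min k 0 • e := by
      rw [add_smul, Finsupp.sum, Finsupp.sum, Finset.sum_smul]
    _ ≤ n • e + c.sum fun ξ k => k • a ξ :=
      add_le_add_right (Finset.sum_le_sum fun ξ _ => min_zsmul_le_zsmul (ha ξ).1 (ha ξ).2 _) _
    _ = combination e a (n, c) := (combination_apply e a n c).symm

end FX

open FX in
/-- **Universal property of `F_X = E(X)`.** For every partially ordered abelian group `G`,
every `e ≥ 0` in `G` and every family `a : X → G` with `0 ≤ a(ξ) ≤ e`, there is a unique
order-preserving group homomorphism `f : F_X → G` with `f(ē) = e` and `f(ā_ξ) = a(ξ)`. -/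
theorem FX_universal_property {X : Type u} {G : Type v} [AddCommGroup G] [PartialOrder G] [IsOrderedAddMonoid G]
    (e : G) (he : 0 ≤ e) (a : X → G) (ha : ∀ ξ, 0 ≤ a ξ ∧ a ξ ≤ e) :
    ∃! f : FX X →+ G, Monotone f ∧ f (eElem X) = e ∧ ∀ ξ, f (aElem ξ) = a ξ := by
  let f : FX X →+ G := (combination e a).comp equivProd.symm.toAddMonoidHom
  have hfe : f (eElem X) = e := by simp [f, ← equivProd_one_zero, combination_apply]
  have hfa (ξ : X) : f (aElem ξ) = a ξ := by
    simp [f, ← equivProd_zero_single, combination_apply]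
  refine ⟨f, ⟨?_, hfe, hfa⟩, fun g ⟨_, hge, hga⟩ =>
    addMonoidHom_ext (hge.trans hfe.symm) fun ξ => (hga ξ).trans (hfa ξ).symm⟩
  refine (monotone_iff_map_nonneg f).2 fun u hu => combination_nonneg_of_nonneg he ha _ ?_
  simpa [← coe_equivProd] using (show (0 : Set X → ℤ) ≤ u from hu)
end

section
/- Let X be a set and let (H, e_H, ⋈) with j : F_X → H be a universal D-envelope of the pointed partially ordered abelian group (F_X, ē). Then j is an order-embedding: j is injective, and j(x) ≤ j(y) in H if and only if x ≤ y in F_X. -/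
/-- An interpolator on a partially ordered abelian group. -/
def IsInterpolator {H : Type*} [AddCommGroup H] [PartialOrder H] [IsOrderedAddMonoid H] (ι : H → H → H → H → H) : Prop :=
  (∀ x x' y y', ι x x' y y' = ι x' x y y') ∧
  (∀ x x' y y', ι x x' y y' = ι x x' y' y) ∧
  (∀ x x' y y', x ≤ y → x ≤ y' → x' ≤ y → x' ≤ y' →
    (x ≤ ι x x' y y' ∧ x' ≤ ι x x' y y' ∧ ι x x' y y' ≤ y ∧ ι x x' y y' ≤ y'))

/-- A D-structure: an unperforated partially ordered abelian group with a distinguished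
positive element `e` such that `0 ≤ x` and `3x ≤ e` imply `x = 0`, and an interpolator. -/
def IsDStructure {H : Type*} [AddCommGroup H] [PartialOrder H] [IsOrderedAddMonoid H] (e : H) (ι : H → H → H → H → H) : Prop :=
  (∀ (m : ℕ) (x : H), 0 < m → 0 ≤ m • x → 0 ≤ x) ∧ 0 ≤ e ∧
  (∀ x : H, 0 ≤ x → 3 • x ≤ e → x = 0) ∧ IsInterpolator ι

/-- A D-morphism between D-structures. -/
def IsDMorphism {H K : Type*} [AddCommGroup H] [PartialOrder H] [IsOrderedAddMonoid H] [AddCommGroup K] [PartialOrder K] [IsOrderedAddMonoid K]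
    (eH : H) (ιH : H → H → H → H → H) (eK : K) (ιK : K → K → K → K → K)
    (h : H →+ K) : Prop :=
  Monotone h ∧ h eH = eK ∧
  ∀ x x' y y', h (ιH x x' y y') = ιK (h x) (h x') (h y) (h y')

/-- A universal D-envelope of a pointed partially ordered abelian group `(G, eG)`. -/
def IsUniversalDEnvelope {G H : Type*} [AddCommGroup G] [PartialOrder G] [IsOrderedAddMonoid G] [AddCommGroup H] [PartialOrder H] [IsOrderedAddMonoid H]
    (eG : G) (eH : H) (bow : H → H → H → H → H) (j : G →+ H) : Prop :=
  IsDStructure eH bow ∧ Monotone j ∧ j eG = eH ∧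
  ∀ (K : Type*) [AddCommGroup K] [PartialOrder K] [IsOrderedAddMonoid K], ∀ (eK : K) (ι : K → K → K → K → K),
    IsDStructure eK ι → ∀ (f : G →+ K), Monotone f → f eG = eK →
    ∃! h : H →+ K, IsDMorphism eH bow eK ι h ∧ ∀ g, h (j g) = f g

universe u v

/-!
`ℤ`, with `1` as distinguished element and `(a, b, _, _) ↦ a ⊔ b` as interpolator, is a
D-structure. Evaluation at a subset `s ⊆ X` is a monotone homomorphism `F_X → ℤ` sending `ē`
to `1`, so by universality it factors through `j` via a monotone map; hence `j x ≤ j y` forces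
`x s ≤ y s` for every `s`, which is `x ≤ y` in the pointwise order of `F_X`.
-/

instance {α : Type*} [AddCommGroup α] [PartialOrder α] [IsOrderedAddMonoid α] :
    IsOrderedAddMonoid (ULift α) where
  add_le_add_left _ _ h c := add_le_add_left (α := α) h c.down

theorem IsDStructure.ulift {α : Type*} [AddCommGroup α] [PartialOrder α] [IsOrderedAddMonoid α]
    {e : α} {ι : α → α → α → α → α} (h : IsDStructure e ι) :
    IsDStructure (ULift.up e) fun a b c d => ULift.up (ι a.down b.down c.down d.down) := by
  obtain ⟨hunperf, he, hsmall, hsymm, hsymm', hinterp⟩ := h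
  refine ⟨fun m x hm hx => hunperf m x.down hm hx, he, fun x hx h3 => ULift.ext _ _ (hsmall _ hx h3),
    fun x x' y y' => congrArg ULift.up (hsymm _ _ _ _),
    fun x x' y y' => congrArg ULift.up (hsymm' _ _ _ _),
    fun x x' y y' => hinterp x.down x'.down y.down y'.down⟩

theorem isDStructure_int_sup : IsDStructure (1 : ℤ) fun a b _ _ => a ⊔ b := by
  refine ⟨fun m x hm hx => ?_, zero_le_one, fun x hx h3 => ?_, fun _ _ _ _ => sup_comm _ _,
    fun _ _ _ _ => rfl, fun _ _ _ _ h₁ h₂ h₃ h₄ => ⟨le_sup_left, le_sup_right, sup_le h₁ h₃, sup_le h₂ h₄⟩⟩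
  · exact nonneg_of_mul_nonneg_right (by simpa using hx) (by exact_mod_cast hm)
  · simp only [nsmul_eq_mul] at h3
    omega

section UniversalDEnvelope

universe w

variable {G H : Type*} [AddCommGroup G] [PartialOrder G] [IsOrderedAddMonoid G]
  [AddCommGroup H] [PartialOrder H] [IsOrderedAddMonoid H]
  {eG : G} {eH : H} {bow : H → H → H → H → H} {j : G →+ H}

theorem IsUniversalDEnvelope.map_le_map_of_le {K : Type w} [AddCommGroup K] [PartialOrder K]
    [IsOrderedAddMonoid K] (henv : IsUniversalDEnvelope.{_, _, w} eG eH bow j) {eK : K}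
    {ι : K → K → K → K → K} (hK : IsDStructure eK ι) (f : G →+ K) (hf : Monotone f)
    (hfe : f eG = eK) {x y : G} (hxy : j x ≤ j y) : f x ≤ f y := by
  obtain ⟨_, ⟨⟨hmono, -, -⟩, hfac⟩, -⟩ := henv.2.2.2 K eK ι hK f hf hfe
  simpa only [hfac] using hmono hxy

theorem IsUniversalDEnvelope.orderEmbedding_of_intStates_separate
    (henv : IsUniversalDEnvelope.{_, _, w} eG eH bow j)
    (hsep : ∀ x y : G, (∀ f : G →+ ℤ, Monotone f → f eG = 1 → f x ≤ f y) → x ≤ y) :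
    Function.Injective j ∧ ∀ x y : G, j x ≤ j y ↔ x ≤ y := by
  have hiff : ∀ x y : G, j x ≤ j y ↔ x ≤ y := fun x y =>
    ⟨fun hxy => hsep x y fun f hf hfe =>
      henv.map_le_map_of_le isDStructure_int_sup.ulift
        ((AddEquiv.ulift (α := ℤ)).symm.toAddMonoidHom.comp f) (fun _ _ hab => hf hab) (congrArg ULift.up hfe) hxy,
      fun hxy => henv.2.1 hxy⟩
  exact ⟨fun x y hxy => le_antisymm ((hiff x y).1 hxy.le) ((hiff y x).1 hxy.ge), hiff⟩

end UniversalDEnvelope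

noncomputable def FX.evalAt {X : Type*} (s : Set X) : FX X →+ ℤ :=
  (Pi.evalAddMonoidHom (fun _ : Set X => ℤ) s).comp (FX X).subtype

/-- **Lemma 3.5.** The canonical map `j : F_X → H` into the universal D-envelope of
`(F_X, ē)` is an order-embedding. -/
theorem envelope_of_FX_orderEmbedding {X : Type u} {H : Type v} [AddCommGroup H] [PartialOrder H] [IsOrderedAddMonoid H]
    (eH : H) (bow : H → H → H → H → H) (j : FX X →+ H)
    (henv : IsUniversalDEnvelope (eElem X) eH bow j) :
    Function.Injective j ∧ ∀ x y : FX X, j x ≤ j y ↔ x ≤ y :=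
  henv.orderEmbedding_of_intStates_separate fun _ _ h s =>
    h (FX.evalAt s) (fun _ _ hab => hab s) rfl
end

section
/- Let X be a nonempty set, fix ξ ∈ X, and let (H, e_H, ⋈) with j : F_X → H be a universal D-envelope of (F_X, ē). Then the element x := ⋈(0, 0, j(ā_ξ), e_H − j(ā_ξ)) of H satisfies 0 < x and 2x ≤ e_H. In particular e_H does not have index 1 in H (there is a nonzero x ≥ 0 with 2x ≤ e_H). -/
universe u v

/-!
The bounds `0 ≤ x` and `2x ≤ e_H` are the interpolation inequalities `0 ≤ x ≤ j(ā_ξ)` and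
`x ≤ e_H - j(ā_ξ)`. To see `x ≠ 0`, test the envelope against the D-structure `(ℤ, 2, min)` with
the order-preserving map `g ↦ g(∅) + g(X)`, which sends `ē` to `2` and `ā_ξ` to `1`: the induced
D-morphism sends `x` to `min 1 (2 - 1) = 1`.
-/

instance {α : Type*} [AddCommMonoid α] [PartialOrder α] [IsOrderedAddMonoid α] :
    IsOrderedAddMonoid (ULift.{w} α) :=
  Function.Injective.isOrderedAddMonoid ULift.down (fun _ _ => rfl) Iff.rfl

theorem IsInterpolator.nonneg_and_two_nsmul_le {H : Type*} [AddCommGroup H] [PartialOrder H]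
    [IsOrderedAddMonoid H] {ι : H → H → H → H → H} (hι : IsInterpolator ι)
    {a e : H} (ha : 0 ≤ a) (hae : a ≤ e) :
    0 ≤ ι 0 0 a (e - a) ∧ 2 • ι 0 0 a (e - a) ≤ e := by
  have hea : 0 ≤ e - a := sub_nonneg.2 hae
  obtain ⟨h0, -, hle_a, hle_ea⟩ := hι.2.2 0 0 a (e - a) ha hea ha hea
  refine ⟨h0, ?_⟩
  calc 2 • ι 0 0 a (e - a) = ι 0 0 a (e - a) + ι 0 0 a (e - a) := two_nsmul _
    _ ≤ a + (e - a) := add_le_add hle_a hle_ea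
    _ = e := add_sub_cancel a e

theorem isInterpolator_min {K : Type*} [AddCommGroup K] [LinearOrder K] [IsOrderedAddMonoid K] :
    IsInterpolator fun (_ _ y y' : K) => min y y' :=
  ⟨fun _ _ _ _ => rfl, fun _ _ _ _ => min_comm _ _,
    fun _ _ _ _ h₁ h₂ h₃ h₄ => ⟨le_min h₁ h₂, le_min h₃ h₄, min_le_left _ _, min_le_right _ _⟩⟩

-- The universal property only quantifies over test objects in one fixed universe.
theorem isDStructure_ulift_int_two_min :
    IsDStructure (ULift.up 2 : ULift.{w} ℤ) fun _ _ y y' => min y y' := by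
  refine ⟨fun m x hm hx => (nsmul_nonneg_iff hm.ne').1 hx, ULift.up_le.2 zero_le_two,
    fun x hx h3x => ULift.ext _ _ ?_, isInterpolator_min⟩
  have hx' : 0 ≤ x.down := hx
  have h3x' : 3 * x.down ≤ 2 := by simpa using ULift.down_le.2 h3x
  change x.down = 0
  omega

theorem aElem_nonneg {X : Type*} (ξ : X) : 0 ≤ aElem ξ := fun _ =>
  Set.indicator_nonneg (fun _ _ => zero_le_one) _

theorem aElem_le_eElem {X : Type*} (ξ : X) : aElem ξ ≤ eElem X := fun _ =>
  Set.indicator_le_self' (fun _ _ => zero_le_one) _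

noncomputable def FX.evalEmptyAddEvalUniv (X : Type*) : FX X →+ ℤ :=
  (Pi.evalAddMonoidHom (fun _ : Set X => ℤ) ∅ + Pi.evalAddMonoidHom _ Set.univ).comp (FX X).subtype

theorem FX.evalEmptyAddEvalUniv_monotone (X : Type*) : Monotone (FX.evalEmptyAddEvalUniv X) :=
  fun _ _ h => add_le_add (h ∅) (h Set.univ)

theorem FX.evalEmptyAddEvalUniv_eElem (X : Type*) : FX.evalEmptyAddEvalUniv X (eElem X) = 2 :=
  rfl

@[simp]
theorem FX.evalEmptyAddEvalUniv_aElem {X : Type*} (ξ : X) :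
    FX.evalEmptyAddEvalUniv X (aElem ξ) = 1 := by
  simp [FX.evalEmptyAddEvalUniv, aElem, aBar]

/-- In the universal D-envelope `(H, e_H, ⋈)` of `(F_X, ē)` with `X` nonempty, the
element `x = ⋈(0, 0, j(ā_ξ), e_H − j(ā_ξ))` satisfies `0 < x` and `2x ≤ e_H`; in
particular `e_H` does not have index `1` in `H`. -/
theorem envelope_orderUnit_not_index_one {X : Type u} (ξ : X)
    {H : Type v} [AddCommGroup H] [PartialOrder H] [IsOrderedAddMonoid H]
    (eH : H) (bow : H → H → H → H → H) (j : FX X →+ H)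
    (henv : IsUniversalDEnvelope (eElem X) eH bow j) :
    0 < bow 0 0 (j (aElem ξ)) (eH - j (aElem ξ)) ∧
    2 • bow 0 0 (j (aElem ξ)) (eH - j (aElem ξ)) ≤ eH := by
  obtain ⟨⟨-, -, -, hbow⟩, hj, hje, huniv⟩ := henv
  have ha : 0 ≤ j (aElem ξ) := by simpa using hj (aElem_nonneg ξ)
  have hae : j (aElem ξ) ≤ eH := hje ▸ hj (aElem_le_eElem ξ)
  obtain ⟨hx, h2x⟩ := hbow.nonneg_and_two_nsmul_le ha hae
  refine ⟨hx.lt_of_ne fun hx0 => ?_, h2x⟩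
  let f : FX X →+ ULift ℤ := AddEquiv.ulift.symm.toAddMonoidHom.comp (FX.evalEmptyAddEvalUniv X)
  have hf : Monotone f := fun _ _ h => FX.evalEmptyAddEvalUniv_monotone X h
  obtain ⟨h, ⟨⟨-, hhe, hhbow⟩, hhj⟩, -⟩ :=
    huniv _ _ _ isDStructure_ulift_int_two_min f hf
      (congrArg ULift.up (FX.evalEmptyAddEvalUniv_eElem X))
  have hx1 : h (bow 0 0 (j (aElem ξ)) (eH - j (aElem ξ))) = ULift.up 1 := by
    rw [hhbow, map_sub, hhj, hhe]
    ext
    change min (FX.evalEmptyAddEvalUniv X (aElem ξ)) (2 - FX.evalEmptyAddEvalUniv X (aElem ξ)) = 1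
    simp
  rw [← hx0, map_zero] at hx1
  exact zero_ne_one (congrArg ULift.down hx1)
end

section
/- Let X be a set and let (H, e, ⋈) with j : F_X → H be a universal D-envelope of (F_X, ē). Write a_ξ = j(ā_ξ), b_ξ = e − a_ξ, and for distinct ξ, η ∈ X set c_{ξ,η} = ⋈(0, a_ξ + a_η − e, a_ξ, a_η). Define subgroups of H: G_∅ = ℤe; G_{ξ} = the subgroup generated by {a_ξ, b_ξ}; G_{ξ,η} = the subgroup generated by {a_ξ, a_η, b_ξ, b_η, c_{ξ,η}}. Then: (i) the homomorphism φ_ξ : ℤ² → H, (x₀,x₁) ↦ x₀a_ξ + x₁b_ξ, is an isomorphism of partially ordered abelian groups from ℤ² (componentwise order) onto G_{ξ}, i.e. it is injective with image G_{ξ} and φ_ξ(v) ≥ 0 iff v ≥ 0; likewise ψ_{ξ,η} : ℤ⁴ → H, (x₀,x₁,x₂,x₃) ↦ x₀c_{ξ,η} + x₁(a_ξ − c_{ξ,η}) + x₂(a_η − c_{ξ,η}) + x₃(c_{ξ,η} + e − a_ξ − a_η), is an isomorphism of partially ordered abelian groups from ℤ⁴ onto G_{ξ,η}; (ii) G_Y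 ∩ G_Z = G_{Y∩Z} for all subsets Y, Z of X with at most two elements. -/
/-- The subgroup `G_Z` of `H` associated with a subset `Z` of `X` with at most two
elements: it is generated by `e`, the `a_ξ` and `b_ξ = e - a_ξ` for `ξ ∈ Z`, and
the `c_{ξ,η}` for distinct `ξ, η ∈ Z`. -/
def Gsub {X H : Type*} [AddCommGroup H] [PartialOrder H] [IsOrderedAddMonoid H] (e : H) (a : X → H)
    (c : X → X → H) (Z : Set X) : AddSubgroup H :=
  AddSubgroup.closure
    ({e} ∪ (a '' Z) ∪ ((fun ξ => e - a ξ) '' Z) ∪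
      {w | ∃ ξ ∈ Z, ∃ η ∈ Z, ξ ≠ η ∧ w = c ξ η})

/-- The map `φ_ξ : ℤ² → H`, `(x₀, x₁) ↦ x₀ a_ξ + x₁ b_ξ`. -/
def phiMap {H : Type*} [AddCommGroup H] [PartialOrder H] [IsOrderedAddMonoid H] (e aξ : H) : ℤ × ℤ → H :=
  fun p => p.1 • aξ + p.2 • (e - aξ)

/-- The map `ψ_{ξ,η} : ℤ⁴ → H`,
`(x₀,x₁,x₂,x₃) ↦ x₀ c + x₁(a_ξ − c) + x₂(a_η − c) + x₃(c + e − a_ξ − a_η)`. -/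
def psiMap {H : Type*} [AddCommGroup H] [PartialOrder H] [IsOrderedAddMonoid H] (e aξ aη c : H) : (Fin 4 → ℤ) → H :=
  fun v => v 0 • c + v 1 • (aξ - c) + v 2 • (aη - c) + v 3 • (c + e - aξ - aη)

universe u v

/-!
Each `W ⊆ X` gives a monotone evaluation `F_X → ℤ` at `W`. Since `(ℤ, 1, max)` is a D-structure,
universality turns it into a monotone `ev_W : H →+ ℤ` with `ev_W e = 1`, `ev_W a_ξ = [ξ ∈ W]`
and `ev_W c_{ξ,η} = [ξ ∈ W ∧ η ∈ W]`. The evaluations at `{ξ}, ∅` (resp. `{ξ,η}, {ξ}, {η}, ∅`)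
form a monotone left inverse of `φ_ξ` (resp. `ψ_{ξ,η}`): this gives injectivity and reflection
of positivity, while preservation of positivity comes from `0 ≤ a_ξ ≤ e` and the interpolation
bounds `0, a_ξ + a_η - e ≤ c_{ξ,η} ≤ a_ξ, a_η`.

On `G_Z` the value of `ev_W` only depends on `W ∩ Z`. So for `ξ ∈ Y \ Z` the coordinates of an
element of `G_Y ∩ G_Z` cannot tell `ξ` apart from its absence, which puts the element in
`G_{Y \ {ξ}}`; induction on `|Y|` gives `G_Y ∩ G_Z = G_{Y ∩ Z}`.
-/

instance {α : Type*} [AddCommMonoid α] [PartialOrder α] [IsOrderedAddMonoid α] :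
    IsOrderedAddMonoid (ULift α) where
  add_le_add_left _ _ h c := add_le_add_left (α := α) h c.down

theorem isInterpolator_max {H : Type*} [AddCommGroup H] [LinearOrder H] [IsOrderedAddMonoid H] :
    IsInterpolator (fun x x' (_ _ : H) => max x x') :=
  ⟨fun x x' _ _ => max_comm x x', fun _ _ _ _ => rfl,
    fun _ _ _ _ hxy hxy' hx'y hx'y' =>
      ⟨le_max_left _ _, le_max_right _ _, max_le hxy hx'y, max_le hxy' hx'y'⟩⟩

theorem isDStructure_ulift_int :
    IsDStructure (ULift.up 1 : ULift ℤ) (fun x x' _ _ => max x x') := by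
  refine ⟨fun m x hm hx => ?_, show (0 : ℤ) ≤ 1 by norm_num, fun x hx h3x => ?_,
    isInterpolator_max⟩
  · exact (nsmul_nonneg_iff (M := ℤ) hm.ne').mp hx
  · have hx : (0 : ℤ) ≤ x.down := hx
    have h3x : 3 • x.down ≤ 1 := h3x
    simp only [nsmul_eq_mul, Nat.cast_ofNat] at h3x
    exact ULift.ext _ _ (show x.down = 0 by omega)

theorem IsUniversalDEnvelope.exists_int_lift.{u₁, u₂, w} {G : Type u₁} {H : Type u₂}
    [AddCommGroup G] [PartialOrder G] [IsOrderedAddMonoid G]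
    [AddCommGroup H] [PartialOrder H] [IsOrderedAddMonoid H]
    {eG : G} {eH : H} {bow : H → H → H → H → H} {j : G →+ H}
    (henv : IsUniversalDEnvelope.{u₁, u₂, w} eG eH bow j)
    (f : G →+ ℤ) (hf : Monotone f) (hfe : f eG = 1) :
    ∃ h : H →+ ℤ, Monotone h ∧ h eH = 1 ∧ (∀ g, h (j g) = f g) ∧
      ∀ x x' y y', h (bow x x' y y') = max (h x) (h x') := by
  -- universality is only available against D-structures in the universe `w`
  let up : ℤ ≃+ ULift.{w} ℤ := AddEquiv.ulift.symm
  obtain ⟨h, ⟨hmono, he, hbow⟩, hj⟩ :=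
    (henv.2.2.2 (ULift.{w} ℤ) _ _ isDStructure_ulift_int (up.toAddMonoidHom.comp f)
      (fun _ _ hxy => hf hxy) (congrArg ULift.up hfe)).exists
  exact ⟨up.symm.toAddMonoidHom.comp h, fun _ _ hxy => hmono hxy, congrArg ULift.down he,
    fun g => congrArg ULift.down (hj g), fun x x' y y' => congrArg ULift.down (hbow x x' y y')⟩

theorem IsInterpolator.interpolant_bounds {H : Type*} [AddCommGroup H] [PartialOrder H]
    [IsOrderedAddMonoid H] {ι : H → H → H → H → H} (hι : IsInterpolator ι) {e x y : H}
    (hx : 0 ≤ x) (hy : 0 ≤ y) (hxe : x ≤ e) (hye : y ≤ e) :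
    0 ≤ ι 0 (x + y - e) x y ∧ x + y - e ≤ ι 0 (x + y - e) x y ∧
      ι 0 (x + y - e) x y ≤ x ∧ ι 0 (x + y - e) x y ≤ y := by
  have hx' : x + y - e ≤ x := by
    rw [add_sub_assoc]; exact add_le_of_nonpos_right (sub_nonpos.mpr hye)
  have hy' : x + y - e ≤ y := by
    rw [add_sub_right_comm]; exact add_le_of_nonpos_left (sub_nonpos.mpr hxe)
  exact hι.2.2 _ _ _ _ hx hy hx' hy'

theorem nonneg_iff_of_leftInverse {A B : Type*} [AddMonoid A] [Preorder A] [AddMonoid B]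
    [Preorder B]
    {f : A → B} {g : B →+ A} (hgf : Function.LeftInverse g f) (hg : Monotone g)
    (hf : ∀ v, 0 ≤ v → 0 ≤ f v) (v : A) : 0 ≤ f v ↔ 0 ≤ v :=
  ⟨fun hv => hgf v ▸ map_zero g ▸ hg hv, hf v⟩

section Subgroups

variable {X H : Type*} [AddCommGroup H] [PartialOrder H] [IsOrderedAddMonoid H]
  {e : H} {a : X → H} {c : X → X → H}

theorem e_mem_Gsub (Z : Set X) : e ∈ Gsub e a c Z :=
  AddSubgroup.subset_closure (.inl (.inl (.inl rfl)))

theorem a_mem_Gsub {Z : Set X} {ξ : X} (hξ : ξ ∈ Z) : a ξ ∈ Gsub e a c Z :=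
  AddSubgroup.subset_closure (.inl (.inl (.inr ⟨ξ, hξ, rfl⟩)))

theorem c_mem_Gsub {Z : Set X} {ξ η : X} (hξ : ξ ∈ Z) (hη : η ∈ Z) (hne : ξ ≠ η) :
    c ξ η ∈ Gsub e a c Z :=
  AddSubgroup.subset_closure (.inr ⟨ξ, hξ, η, hη, hne, rfl⟩)

theorem Gsub_le {Z : Set X} {K : AddSubgroup H} (he : e ∈ K) (ha : ∀ ξ ∈ Z, a ξ ∈ K)
    (hc : ∀ ξ ∈ Z, ∀ η ∈ Z, ξ ≠ η → c ξ η ∈ K) : Gsub e a c Z ≤ K := by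
  refine (AddSubgroup.closure_le K).mpr ?_
  rintro _ (((rfl | ⟨ξ, hξ, rfl⟩) | ⟨ξ, hξ, rfl⟩) | ⟨ξ, hξ, η, hη, hne, rfl⟩)
  exacts [he, ha ξ hξ, sub_mem he (ha ξ hξ), hc ξ hξ η hη hne]

theorem Gsub_mono {Y Z : Set X} (hYZ : Y ⊆ Z) : Gsub e a c Y ≤ Gsub e a c Z :=
  Gsub_le (e_mem_Gsub Z) (fun _ hξ => a_mem_Gsub (hYZ hξ))
    (fun _ hξ _ hη hne => c_mem_Gsub (hYZ hξ) (hYZ hη) hne)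

end Subgroups

open scoped Classical in
/-- The morphisms `H → ℤ` that universality produces from evaluating `F_X` at each `W ⊆ X`. -/
structure IsEvaluationFamily {X H : Type*} [AddCommGroup H] [PartialOrder H] (e : H)
    (a : X → H) (c : X → X → H) (ev : Set X → H →+ ℤ) : Prop where
  monotone : ∀ W, Monotone (ev W)
  map_e : ∀ W, ev W e = 1
  map_a : ∀ W ξ, ev W (a ξ) = if ξ ∈ W then 1 else 0
  map_c : ∀ W ξ η, ev W (c ξ η) = if ξ ∈ W ∧ η ∈ W then 1 else 0

theorem IsUniversalDEnvelope.exists_isEvaluationFamily {X H : Type*}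
    [AddCommGroup H] [PartialOrder H] [IsOrderedAddMonoid H]
    {e : H} {bow : H → H → H → H → H} {j : FX X →+ H}
    (henv : IsUniversalDEnvelope (eElem X) e bow j)
    {a : X → H} (hadef : ∀ ξ, a ξ = j (aElem ξ))
    {c : X → X → H} (hcdef : ∀ ξ η, c ξ η = bow 0 (a ξ + a η - e) (a ξ) (a η)) :
    ∃ ev, IsEvaluationFamily e a c ev := by
  classical
  let evalAt (W : Set X) : FX X →+ ℤ :=
    (Pi.evalAddMonoidHom (fun _ : Set X => ℤ) W).comp (FX X).subtype
  choose ev hmono he hj hbow using fun W =>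
    henv.exists_int_lift (evalAt W) (fun _ _ hfg => hfg W) rfl
  have map_a : ∀ W ξ, ev W (a ξ) = if ξ ∈ W then 1 else 0 := fun W ξ => by
    simp [hadef, hj, evalAt, aElem, aBar, Set.indicator_apply]
  refine ⟨ev, hmono, he, map_a, fun W ξ η => ?_⟩
  rw [hcdef, hbow, map_zero, map_sub, map_add, he, map_a, map_a]
  by_cases hξ : ξ ∈ W <;> by_cases hη : η ∈ W <;> simp [hξ, hη]

section Parametrizations

variable {H : Type*} [AddCommGroup H] [PartialOrder H] [IsOrderedAddMonoid H]

def phiHom (e aξ : H) : ℤ × ℤ →+ H :=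
  AddMonoidHom.mk' (phiMap e aξ) fun p q => by
    simp only [phiMap, Prod.fst_add, Prod.snd_add, add_smul]; abel

def psiHom (e aξ aη c : H) : (Fin 4 → ℤ) →+ H :=
  AddMonoidHom.mk' (psiMap e aξ aη c) fun v w => by
    simp only [psiMap, Pi.add_apply, add_smul]; abel

theorem phiMap_nonneg {e aξ : H} (h0 : 0 ≤ aξ) (he : aξ ≤ e) {p : ℤ × ℤ} (hp : 0 ≤ p) :
    0 ≤ phiMap e aξ p :=
  add_nonneg (zsmul_nonneg h0 hp.1) (zsmul_nonneg (sub_nonneg.mpr he) hp.2)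

theorem psiMap_nonneg {e aξ aη c : H} (hc : 0 ≤ c) (hcξ : c ≤ aξ) (hcη : c ≤ aη)
    (hce : aξ + aη - e ≤ c) {v : Fin 4 → ℤ} (hv : 0 ≤ v) : 0 ≤ psiMap e aξ aη c v := by
  have hc' : 0 ≤ c + e - aξ - aη := by
    rw [show c + e - aξ - aη = c - (aξ + aη - e) by abel]; exact sub_nonneg.mpr hce
  exact add_nonneg (add_nonneg (add_nonneg (zsmul_nonneg hc (hv 0))
    (zsmul_nonneg (sub_nonneg.mpr hcξ) (hv 1))) (zsmul_nonneg (sub_nonneg.mpr hcη) (hv 2)))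
    (zsmul_nonneg hc' (hv 3))

variable {X : Type*} {e : H} {a : X → H} {c : X → X → H}

theorem range_phiMap (ξ : X) : Set.range (phiMap e (a ξ)) = Gsub e a c {ξ} := by
  suffices h : (phiHom e (a ξ)).range = Gsub e a c {ξ} by
    rw [← h, AddMonoidHom.coe_range]; rfl
  refine le_antisymm ?_ ?_
  · rintro _ ⟨p, rfl⟩
    show p.1 • a ξ + p.2 • (e - a ξ) ∈ _
    exact add_mem (zsmul_mem (a_mem_Gsub (Set.mem_singleton ξ)) _)
      (zsmul_mem (sub_mem (e_mem_Gsub _) (a_mem_Gsub (Set.mem_singleton ξ))) _)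
  · refine Gsub_le ⟨(1, 1), ?_⟩ ?_ ?_
    · simp [phiHom, phiMap]
    · rintro _ rfl
      exact ⟨(1, 0), by simp [phiHom, phiMap]⟩
    · rintro _ rfl _ rfl hne
      exact absurd rfl hne

theorem range_psiMap {ξ η : X} (hne : ξ ≠ η) (hc : c η ξ = c ξ η) :
    Set.range (psiMap e (a ξ) (a η) (c ξ η)) = Gsub e a c {ξ, η} := by
  have hξ : ξ ∈ ({ξ, η} : Set X) := .inl rfl
  have hη : η ∈ ({ξ, η} : Set X) := .inr rfl
  suffices h : (psiHom e (a ξ) (a η) (c ξ η)).range = Gsub e a c {ξ, η} by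
    rw [← h, AddMonoidHom.coe_range]; rfl
  refine le_antisymm ?_ ?_
  · rintro _ ⟨v, rfl⟩
    show v 0 • c ξ η + v 1 • (a ξ - c ξ η) + v 2 • (a η - c ξ η) +
      v 3 • (c ξ η + e - a ξ - a η) ∈ _
    have hcG : c ξ η ∈ Gsub e a c {ξ, η} := c_mem_Gsub hξ hη hne
    exact add_mem (add_mem (add_mem (zsmul_mem hcG _)
      (zsmul_mem (sub_mem (a_mem_Gsub hξ) hcG) _)) (zsmul_mem (sub_mem (a_mem_Gsub hη) hcG) _))
      (zsmul_mem (sub_mem (sub_mem (add_mem hcG (e_mem_Gsub _)) (a_mem_Gsub hξ))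
        (a_mem_Gsub hη)) _)
  · refine Gsub_le ⟨![1, 1, 1, 1], ?_⟩ ?_ ?_
    · simp [psiHom, psiMap]; abel
    · rintro _ (rfl | rfl)
      · exact ⟨![1, 1, 0, 0], by simp [psiHom, psiMap]⟩
      · exact ⟨![1, 0, 1, 0], by simp [psiHom, psiMap]⟩
    · rintro _ (rfl | rfl) _ (rfl | rfl) hne'
      · exact absurd rfl hne'
      · exact ⟨![1, 0, 0, 0], by simp [psiHom, psiMap]⟩
      · exact ⟨![1, 0, 0, 0], by simp [psiHom, psiMap, hc]⟩
      · exact absurd rfl hne'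

end Parametrizations

section Coordinates

variable {X H : Type*} [AddCommGroup H] [PartialOrder H]
  {e : H} {a : X → H} {c : X → X → H} {ev : Set X → H →+ ℤ}

def phiCoords (ev : Set X → H →+ ℤ) (ξ : X) : H →+ ℤ × ℤ :=
  (ev {ξ}).prod (ev ∅)

def psiCoords (ev : Set X → H →+ ℤ) (ξ η : X) : H →+ (Fin 4 → ℤ) :=
  AddMonoidHom.pi fun i => ev (![{ξ, η}, {ξ}, {η}, ∅] i)

namespace IsEvaluationFamily

theorem monotone_phiCoords (hev : IsEvaluationFamily e a c ev) (ξ : X) :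
    Monotone (phiCoords ev ξ) :=
  fun _ _ hxy => ⟨hev.monotone _ hxy, hev.monotone _ hxy⟩

theorem monotone_psiCoords (hev : IsEvaluationFamily e a c ev) (ξ η : X) :
    Monotone (psiCoords ev ξ η) :=
  fun _ _ hxy _ => hev.monotone _ hxy

theorem leftInverse_phiCoords [IsOrderedAddMonoid H] (hev : IsEvaluationFamily e a c ev)
    (ξ : X) :
    Function.LeftInverse (phiCoords ev ξ) (phiMap e (a ξ)) := fun p => by
  ext <;> simp [phiCoords, phiMap, hev.map_e, hev.map_a]

theorem leftInverse_psiCoords [IsOrderedAddMonoid H] (hev : IsEvaluationFamily e a c ev)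
    {ξ η : X} (hne : ξ ≠ η) :
    Function.LeftInverse (psiCoords ev ξ η) (psiMap e (a ξ) (a η) (c ξ η)) := fun v => by
  funext i
  fin_cases i <;> simp [psiCoords, psiMap, hev.map_e, hev.map_a, hev.map_c, hne, hne.symm]

end IsEvaluationFamily

end Coordinates

namespace IsEvaluationFamily

variable {X H : Type*} [AddCommGroup H] [PartialOrder H] [IsOrderedAddMonoid H]
  {e : H} {a : X → H} {c : X → X → H} {ev : Set X → H →+ ℤ}

theorem apply_eq_of_inter_eq (hev : IsEvaluationFamily e a c ev) {Z W W' : Set X}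
    (hW : W ∩ Z = W' ∩ Z) {x : H} (hx : x ∈ Gsub e a c Z) : ev W x = ev W' x := by
  classical
  have hmem : ∀ ξ ∈ Z, (ξ ∈ W ↔ ξ ∈ W') := fun ξ hξ => by
    simpa [hξ] using Set.ext_iff.mp hW ξ
  refine Gsub_le (K := (ev W).eqLocus (ev W')) ?_ (fun ξ hξ => ?_) (fun ξ hξ η hη _ => ?_) hx
  · exact (hev.map_e W).trans (hev.map_e W').symm
  · show ev W (a ξ) = ev W' (a ξ)
    rw [hev.map_a, hev.map_a]
    exact if_congr (hmem ξ hξ) rfl rfl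
  · show ev W (c ξ η) = ev W' (c ξ η)
    rw [hev.map_c, hev.map_c]
    exact if_congr (and_congr (hmem ξ hξ) (hmem η hη)) rfl rfl

theorem mem_Gsub_empty_of_singleton (hev : IsEvaluationFamily e a c ev) {Z : Set X} {ξ : X}
    (hξZ : ξ ∉ Z) {x : H} (hx : x ∈ Gsub e a c {ξ}) (hxZ : x ∈ Gsub e a c Z) :
    x ∈ Gsub e a c ∅ := by
  obtain ⟨p, rfl⟩ : x ∈ Set.range (phiMap e (a ξ)) := by
    rw [range_phiMap (c := c)]; exact hx
  have hW : {ξ} ∩ Z = ∅ ∩ Z := by rw [Set.singleton_inter_eq_empty.mpr hξZ, Set.empty_inter]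
  have hp : p.2 = p.1 := by
    obtain ⟨h1, h2⟩ := Prod.ext_iff.mp (hev.leftInverse_phiCoords ξ p)
    rw [← h1, ← h2]
    exact (hev.apply_eq_of_inter_eq hW hxZ).symm
  rw [phiMap, hp, ← smul_add, add_sub_cancel]
  exact zsmul_mem (e_mem_Gsub _) _

theorem mem_Gsub_singleton_of_pair (hev : IsEvaluationFamily e a c ev) {Z : Set X} {ξ η : X}
    (hne : ξ ≠ η) (hc : c η ξ = c ξ η) (hξZ : ξ ∉ Z) {x : H} (hx : x ∈ Gsub e a c {ξ, η})
    (hxZ : x ∈ Gsub e a c Z) : x ∈ Gsub e a c {η} := by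
  obtain ⟨v, rfl⟩ : x ∈ Set.range (psiMap e (a ξ) (a η) (c ξ η)) := by
    rwa [range_psiMap hne hc]
  have hcoord := hev.leftInverse_psiCoords hne v
  have h02 : v 0 = v 2 := by
    rw [← congrFun hcoord 0, ← congrFun hcoord 2]
    exact hev.apply_eq_of_inter_eq (Set.insert_inter_of_notMem hξZ) hxZ
  have h13 : v 1 = v 3 := by
    have hW : {ξ} ∩ Z = ∅ ∩ Z := by rw [Set.singleton_inter_eq_empty.mpr hξZ, Set.empty_inter]
    rw [← congrFun hcoord 1, ← congrFun hcoord 3]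
    exact hev.apply_eq_of_inter_eq hW hxZ
  have hv : psiMap e (a ξ) (a η) (c ξ η) v = phiMap e (a η) (v 0, v 1) := by
    simp only [psiMap, phiMap, h02, h13]
    module
  rw [hv]
  exact (range_phiMap η).le ⟨_, rfl⟩

theorem mem_Gsub_of_mem_Gsub_insert (hev : IsEvaluationFamily e a c ev)
    (hc : ∀ ξ η, c η ξ = c ξ η) {T Z : Set X} {ξ : X} (hT : T.Subsingleton) (hξT : ξ ∉ T)
    (hξZ : ξ ∉ Z) {x : H} (hx : x ∈ Gsub e a c (insert ξ T)) (hxZ : x ∈ Gsub e a c Z) :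
    x ∈ Gsub e a c T := by
  rcases hT.eq_empty_or_singleton with rfl | ⟨η, rfl⟩
  · exact hev.mem_Gsub_empty_of_singleton hξZ (by simpa using hx) hxZ
  · exact hev.mem_Gsub_singleton_of_pair (fun h => hξT (Set.mem_singleton_iff.mpr h)) (hc _ _)
      hξZ hx hxZ

theorem Gsub_inf_Gsub (hev : IsEvaluationFamily e a c ev) (hc : ∀ ξ η, c η ξ = c ξ η)
    {Y : Set X} (hY : Y.Finite) (hY2 : Y.ncard ≤ 2) (Z : Set X) :
    Gsub e a c Y ⊓ Gsub e a c Z = Gsub e a c (Y ∩ Z) := by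
  refine le_antisymm ?_ (le_inf (Gsub_mono Set.inter_subset_left)
    (Gsub_mono Set.inter_subset_right))
  obtain ⟨n, hn⟩ : ∃ n, Y.ncard = n := ⟨_, rfl⟩
  induction n using Nat.strong_induction_on generalizing Y with
  | _ n ih =>
    rintro x ⟨hxY, hxZ⟩
    by_cases hYZ : Y ⊆ Z
    · rwa [Set.inter_eq_left.mpr hYZ]
    obtain ⟨ξ, hξY, hξZ⟩ := Set.not_subset.mp hYZ
    have hn1 : (Y \ {ξ}).ncard = n - 1 := hn ▸ Set.ncard_sdiff_singleton_of_mem hξY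
    have hn0 : 0 < n := hn ▸ (Set.ncard_pos hY).mpr ⟨ξ, hξY⟩
    have hT : (Y \ {ξ}).Subsingleton := fun _ hs _ ht =>
      (Set.ncard_le_one hY.sdiff).mp (by omega) _ hs _ ht
    have hxT : x ∈ Gsub e a c (Y \ {ξ}) := by
      refine hev.mem_Gsub_of_mem_Gsub_insert hc hT (fun h => h.2 rfl) hξZ ?_ hxZ
      rwa [Set.insert_sdiff_singleton, Set.insert_eq_of_mem hξY]
    have := ih (n - 1) (by omega) hY.sdiff (by omega) hn1 ⟨hxT, hxZ⟩
    rwa [← Set.inter_sdiff_right_comm, Set.sdiff_singleton_eq_self (fun h => hξZ h.2)] at this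

end IsEvaluationFamily

/-- **Lemma 3.7.** In the universal D-envelope `(H, e, ⋈)` of `(F_X, ē)`, writing
`a_ξ = j(ā_ξ)`, `b_ξ = e − a_ξ` and `c_{ξ,η} = ⋈(0, a_ξ + a_η − e, a_ξ, a_η)`:
(i) `φ_ξ` and `ψ_{ξ,η}` are isomorphisms of partially ordered abelian groups from
`ℤ²` (resp. `ℤ⁴`) onto `G_{ξ}` (resp. `G_{ξ,η}`);
(ii) `G_Y ∩ G_Z = G_{Y ∩ Z}` for all `Y, Z ⊆ X` with at most two elements. -/
theorem envelope_subgroups_GZ {X : Type u} {H : Type v} [AddCommGroup H] [PartialOrder H] [IsOrderedAddMonoid H]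
    (e : H) (bow : H → H → H → H → H) (j : FX X →+ H)
    (henv : IsUniversalDEnvelope (eElem X) e bow j)
    (a : X → H) (hadef : ∀ ξ, a ξ = j (aElem ξ))
    (c : X → X → H) (hcdef : ∀ ξ η, c ξ η = bow 0 (a ξ + a η - e) (a ξ) (a η)) :
    -- (i) `φ_ξ : ℤ² ≅ G_{ξ}` as partially ordered abelian groups
    (∀ ξ : X,
      Function.Injective (phiMap e (a ξ)) ∧
      Set.range (phiMap e (a ξ)) = ↑(Gsub e a c {ξ}) ∧
      (∀ p : ℤ × ℤ, 0 ≤ phiMap e (a ξ) p ↔ 0 ≤ p)) ∧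
    -- (i) `ψ_{ξ,η} : ℤ⁴ ≅ G_{ξ,η}` as partially ordered abelian groups
    (∀ ξ η : X, ξ ≠ η →
      Function.Injective (psiMap e (a ξ) (a η) (c ξ η)) ∧
      Set.range (psiMap e (a ξ) (a η) (c ξ η)) = ↑(Gsub e a c {ξ, η}) ∧
      (∀ v : Fin 4 → ℤ, 0 ≤ psiMap e (a ξ) (a η) (c ξ η) v ↔ 0 ≤ v)) ∧
    -- (ii) intersections
    (∀ Y Z : Set X, Y.Finite → Y.ncard ≤ 2 → Z.Finite → Z.ncard ≤ 2 →
      Gsub e a c Y ⊓ Gsub e a c Z = Gsub e a c (Y ∩ Z)) := by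
  obtain ⟨ev, hev⟩ := henv.exists_isEvaluationFamily hadef hcdef
  obtain ⟨⟨-, -, -, hbow⟩, hj, hje, -⟩ := henv
  have ha0 : ∀ ξ, 0 ≤ a ξ := fun ξ => by simpa [hadef] using hj (aElem_nonneg ξ)
  have hae : ∀ ξ, a ξ ≤ e := fun ξ => by simpa [hadef, hje] using hj (aElem_le_eElem ξ)
  have hc : ∀ ξ η, c η ξ = c ξ η := fun ξ η => by
    rw [hcdef, hcdef, add_comm (a η), hbow.2.1]
  refine ⟨fun ξ => ⟨(hev.leftInverse_phiCoords ξ).injective, range_phiMap ξ,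
      nonneg_iff_of_leftInverse (hev.leftInverse_phiCoords ξ) (hev.monotone_phiCoords ξ)
        fun _ => phiMap_nonneg (ha0 ξ) (hae ξ)⟩,
    fun ξ η hne => ⟨(hev.leftInverse_psiCoords hne).injective, range_psiMap hne (hc ξ η), ?_⟩,
    fun Y Z hY hY2 _ _ => hev.Gsub_inf_Gsub hc hY hY2 Z⟩
  obtain ⟨hc0, hce, hcξ, hcη⟩ :=
    hcdef ξ η ▸ hbow.interpolant_bounds (ha0 ξ) (ha0 η) (hae ξ) (hae η)
  exact nonneg_iff_of_leftInverse (hev.leftInverse_psiCoords hne) (hev.monotone_psiCoords ξ η)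
    fun _ => psiMap_nonneg hc0 hcξ hcη hce
end
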